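/- arXiv:1703.04254 — 8 statements merged into one kernel-verified Lean document; each statement's English description precedes it below -/
import Mathlib

section
/- Let n ≥ 1 and let a_1, …, a_n ∈ [0,1] satisfy ∑_{k=1}^n a_k = 1. Then ∑_{k=1}^n a_k·log(e/a_k) ≤ 2·∑_{k=1}^n a_k·(1 + log k), where log is the natural logarithm and the summand a_k·log(e/a_k) is interpreted as 0 when a_k = 0. -/
/-!
Gibbs' inequality `x log(p/x) ≤ p - x` bounds each term `a_k log(e/a_k)` by `p_k + a_k (1 - log p_k)`.
With `p_k = 1/(2k²)` the extra mass `∑ p_k` is at most `1` by the Basel-type bound `∑ 1/k² ≤ 2`,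
and `-log p_k = log 2 + 2 log k ≤ 1 + 2 log k`.
-/

open Real Finset

theorem mul_log_exp_div_le {x p : ℝ} (hx : 0 ≤ x) (hp : 0 < p) :
    x * log (exp 1 / x) ≤ p - x * log p := by
  obtain rfl | hx := hx.eq_or_lt
  · simpa using hp.le
  have hgibbs : log p - log x ≤ p / x - 1 := by
    rw [← log_div hp.ne' hx.ne']
    exact log_le_sub_one_of_pos (div_pos hp hx)
  have hmul := mul_le_mul_of_nonneg_left hgibbs hx.le
  rw [mul_sub, mul_sub_one, mul_div_cancel₀ _ hx.ne'] at hmul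
  rw [log_div (exp_ne_zero 1) hx.ne', log_exp]
  linarith

theorem sum_Icc_inv_two_mul_sq_le_one (n : ℕ) :
    ∑ k ∈ Icc 1 n, ((2 : ℝ) * k ^ 2)⁻¹ ≤ 1 := by
  have hbasel : ∑ k ∈ Icc 1 n, ((k : ℝ) ^ 2)⁻¹ ≤ 2 := by
    have hIcc : Icc 1 n = Ioo 0 (n + 1) := by ext; simp; omega
    simpa [hIcc] using sum_Ioo_inv_sq_le (α := ℝ) 0 (n + 1)
  simp_rw [mul_inv, ← mul_sum]
  linarith

theorem mul_log_exp_div_le_of_one_le {k : ℕ} (hk : 1 ≤ k) {x : ℝ} (hx : 0 ≤ x) :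
    x * log (exp 1 / x) ≤ (2 * k ^ 2 : ℝ)⁻¹ + 2 * (x * (1 + log k)) - x := by
  have hk : (0 : ℝ) < k := by exact_mod_cast hk
  have hlog : -log (2 * k ^ 2 : ℝ)⁻¹ = log 2 + 2 * log k := by
    rw [log_inv, neg_neg, log_mul two_ne_zero (by positivity), log_pow, Nat.cast_ofNat]
  have hlog2 : log 2 ≤ 1 := (log_le_sub_one_of_pos two_pos).trans (by norm_num)
  have := mul_log_exp_div_le hx (by positivity : (0 : ℝ) < (2 * (k : ℝ) ^ 2)⁻¹)
  rw [sub_eq_add_neg, ← mul_neg, hlog] at this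
  nlinarith

theorem stmt0_general (n : ℕ) (a : ℕ → ℝ)
    (ha : ∀ k ∈ Finset.Icc 1 n, 0 ≤ a k ∧ a k ≤ 1)
    (hsum : ∑ k ∈ Finset.Icc 1 n, a k = 1) :
    ∑ k ∈ Finset.Icc 1 n, a k * Real.log (Real.exp 1 / a k)
      ≤ 2 * ∑ k ∈ Finset.Icc 1 n, a k * (1 + Real.log k) := by
  calc ∑ k ∈ Icc 1 n, a k * log (exp 1 / a k)
      ≤ ∑ k ∈ Icc 1 n, ((2 * k ^ 2 : ℝ)⁻¹ + 2 * (a k * (1 + log k)) - a k) :=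
        sum_le_sum fun k hk ↦ mul_log_exp_div_le_of_one_le (mem_Icc.1 hk).1 (ha k hk).1
    _ = ∑ k ∈ Icc 1 n, (2 * k ^ 2 : ℝ)⁻¹ + 2 * ∑ k ∈ Icc 1 n, a k * (1 + log k) - 1 := by
        rw [sum_sub_distrib, sum_add_distrib, ← mul_sum, hsum]
    _ ≤ 2 * ∑ k ∈ Icc 1 n, a k * (1 + log k) := by
        linarith [sum_Icc_inv_two_mul_sq_le_one n]

/-- Let `n ≥ 1` and `a_1, …, a_n ∈ [0,1]` satisfy `∑ a_k = 1`. Then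
`∑ a_k · log(e/a_k) ≤ 2 · ∑ a_k · (1 + log k)`. (When `a_k = 0` the summand
`a_k · log(e/a_k)` is `0`, consistent with Lean's `Real.log 0 = 0`.) -/
theorem stmt0 (n : ℕ) (hn : 1 ≤ n) (a : ℕ → ℝ)
    (ha : ∀ k ∈ Finset.Icc 1 n, 0 ≤ a k ∧ a k ≤ 1)
    (hsum : ∑ k ∈ Finset.Icc 1 n, a k = 1) :
    ∑ k ∈ Finset.Icc 1 n, a k * Real.log (Real.exp 1 / a k)
      ≤ 2 * ∑ k ∈ Finset.Icc 1 n, a k * (1 + Real.log k) :=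
  stmt0_general n a ha hsum
end

section
/- Let (X, μ) be a σ-finite measure space, let n ≥ 1, and let f_1, …, f_n : X → ℂ be measurable functions with ‖f_k‖_{1,∞} < ∞ for each k. Then ‖∑_{k=1}^n f_k‖_{1,∞} ≤ 4·∑_{k=1}^n ‖f_k‖_{1,∞}·(1 + log k). -/
/-!
Fix `t > 0`, a set `E ⊆ {‖∑ f_k‖ > t}` of finite measure `L`, and weights `γ_k > ‖f_k‖_{1,∞}`.
Truncate `f_k` at the level `s_k = e² k³ γ_k / L`. The set where some `‖f_k‖ > s_k` has measure
at most `∑ γ_k / s_k ≤ L / 4`, because `∑ k⁻³ ≤ 5/4 ≤ e²/4`. On the rest of `E` we have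
`t ≤ ∑ min (‖f_k‖, s_k)`, and by the layer-cake formula
`∫_E min (‖f_k‖, s_k) ≤ ∫_0^{s_k} min (L, γ_k / u) du = γ_k (1 + log (s_k L / γ_k))
= 3 γ_k (1 + log k)`. Hence `t L ≤ t L / 4 + 3 ∑ γ_k (1 + log k)`. By σ-finiteness these sets `E`
exhaust `{‖∑ f_k‖ > t}`.
-/

open MeasureTheory ENNReal

/-- The weak-`L¹` quasi-norm `‖h‖_{1,∞} = sup_{t>0} t · μ {x : |h x| > t}`. -/
noncomputable def weakL1 {X : Type*} [MeasurableSpace X] (μ : Measure X) (h : X → ℂ) : ℝ≥0∞ :=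
  ⨆ t ∈ Set.Ioi (0 : ℝ), ENNReal.ofReal t * μ {x | t < ‖h x‖}

open Set Filter Topology

theorem sum_Icc_inv_pow_three_le_sub {n : ℕ} (hn : 1 ≤ n) :
    ∑ k ∈ Finset.Icc 1 n, ((k : ℝ) ^ 3)⁻¹ ≤ 5 / 4 - 1 / (2 * n * (n + 1)) := by
  induction n, hn using Nat.le_induction with
  | base => norm_num
  | succ m hm ih =>
    rw [Finset.sum_Icc_succ_top (by omega)]
    have hm' : (1 : ℝ) ≤ m := by exact_mod_cast hm
    -- `1/(m+1)^3 ≤ 1/(m(m+1)(m+2))`, which telescopes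
    have hstep : (((m : ℝ) + 1) ^ 3)⁻¹ ≤
        1 / (2 * (m : ℝ) * (m + 1)) - 1 / (2 * ((m : ℝ) + 1) * (m + 1 + 1)) := by
      rw [div_sub_div _ _ (by positivity) (by positivity), inv_eq_one_div,
        div_le_div_iff₀ (by positivity) (by positivity)]
      nlinarith
    push_cast
    linarith

theorem sum_Icc_inv_exp_two_mul_pow_three_le (n : ℕ) :
    ∑ k ∈ Finset.Icc 1 n, (Real.exp 2 * (k : ℝ) ^ 3)⁻¹ ≤ 1 / 4 := by
  have hcube : ∑ k ∈ Finset.Icc 1 n, ((k : ℝ) ^ 3)⁻¹ ≤ 5 / 4 := by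
    rcases Nat.eq_zero_or_pos n with rfl | hn
    · norm_num
    · have := sum_Icc_inv_pow_three_le_sub hn
      have : (0 : ℝ) < 1 / (2 * n * (n + 1)) := by positivity
      linarith
  have hexp : (5 : ℝ) ≤ Real.exp 2 := by
    have := Real.exp_one_gt_d9
    rw [show (2 : ℝ) = 1 + 1 by norm_num, Real.exp_add]
    nlinarith
  simp_rw [mul_inv, ← Finset.mul_sum]
  rw [inv_mul_le_iff₀ (Real.exp_pos 2)]
  nlinarith

noncomputable def truncLevel (γ L : ℝ) (k : ℕ) : ℝ := γ / L * (Real.exp 2 * k ^ 3)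

section truncLevel

variable {γ L : ℝ} {k : ℕ}

theorem div_le_truncLevel (hγ : 0 < γ) (hL : 0 < L) (hk : 1 ≤ k) : γ / L ≤ truncLevel γ L k :=
  le_mul_of_one_le_right (div_pos hγ hL).le <|
    one_le_mul_of_one_le_of_one_le (Real.one_le_exp zero_le_two)
      (one_le_pow₀ (by exact_mod_cast hk))

theorem truncLevel_pos (hγ : 0 < γ) (hL : 0 < L) (hk : 1 ≤ k) : 0 < truncLevel γ L k :=
  (div_pos hγ hL).trans_le (div_le_truncLevel hγ hL hk)

theorem log_truncLevel_mul_div (hγ : 0 < γ) (hL : 0 < L) (hk : 1 ≤ k) :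
    Real.log (truncLevel γ L k * L / γ) = 2 + 3 * Real.log k := by
  have hk' : (0 : ℝ) < k := by exact_mod_cast hk
  rw [show truncLevel γ L k * L / γ = Real.exp 2 * k ^ 3 by
      rw [truncLevel]; field_simp,
    Real.log_mul (by positivity) (by positivity), Real.log_exp, Real.log_pow]
  push_cast
  ring

theorem sum_div_truncLevel_le {n : ℕ} {γ : ℕ → ℝ} (hγ : ∀ k ∈ Finset.Icc 1 n, 0 < γ k)
    (hL : 0 < L) :
    ∑ k ∈ Finset.Icc 1 n, γ k / truncLevel (γ k) L k ≤ L / 4 := by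
  have hsum : ∑ k ∈ Finset.Icc 1 n, γ k / truncLevel (γ k) L k =
      L * ∑ k ∈ Finset.Icc 1 n, (Real.exp 2 * (k : ℝ) ^ 3)⁻¹ := by
    rw [Finset.mul_sum]
    refine Finset.sum_congr rfl fun k hk => ?_
    have := hγ k hk
    have hk' : (0 : ℝ) < k := by exact_mod_cast (Finset.mem_Icc.1 hk).1
    rw [truncLevel]
    field_simp
  rw [hsum]
  nlinarith [sum_Icc_inv_exp_two_mul_pow_three_le n]

end truncLevel

theorem one_add_log_natCast_nonneg (k : ℕ) : 0 ≤ 1 + Real.log k := by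
  linarith [Real.log_natCast_nonneg k]

theorem lintegral_Ioc_ofReal_div {γ a b : ℝ} (hγ : 0 ≤ γ) (ha : 0 < a) (hab : a ≤ b) :
    ∫⁻ u in Ioc a b, ENNReal.ofReal (γ / u) = ENNReal.ofReal (γ * Real.log (b / a)) := by
  have hcont : ContinuousOn (fun u : ℝ => γ / u) (Icc a b) :=
    continuousOn_const.div continuousOn_id fun u hu => (ha.trans_le hu.1).ne'
  rw [← ofReal_integral_eq_lintegral_ofReal
      (hcont.integrableOn_Icc.mono_set Ioc_subset_Icc_self)
      ((ae_restrict_iff' measurableSet_Ioc).2 (ae_of_all _ fun u hu =>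
        div_nonneg hγ (ha.trans hu.1).le)),
    ← intervalIntegral.integral_of_le hab,
    intervalIntegral.integral_congr (g := fun u => γ * u⁻¹) fun u _ => div_eq_mul_inv γ u,
    intervalIntegral.integral_const_mul, integral_inv_of_pos ha (ha.trans_le hab)]

theorem lintegral_Ioc_min_div_le {γ L s : ℝ} (hγ : 0 < γ) (hL : 0 < L) (hs : γ / L ≤ s) :
    ∫⁻ u in Ioc 0 s, ENNReal.ofReal (min L (γ / u)) ≤
      ENNReal.ofReal (γ * (1 + Real.log (s * L / γ))) := by
  have ha : 0 < γ / L := div_pos hγ hL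
  have hlog : 0 ≤ Real.log (s * L / γ) :=
    Real.log_nonneg ((one_le_div hγ).2 ((div_le_iff₀ hL).1 hs))
  calc ∫⁻ u in Ioc 0 s, ENNReal.ofReal (min L (γ / u))
      ≤ (∫⁻ _ in Ioc 0 (γ / L), ENNReal.ofReal L) +
          ∫⁻ u in Ioc (γ / L) s, ENNReal.ofReal (γ / u) := by
        rw [← Ioc_union_Ioc_eq_Ioc ha.le hs]
        refine (lintegral_union_le _ _ _).trans (add_le_add ?_ ?_) <;>
          exact lintegral_mono fun u => ofReal_le_ofReal (by simp)
    _ = ENNReal.ofReal (γ * (1 + Real.log (s * L / γ))) := by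
        rw [lintegral_Ioc_ofReal_div hγ.le ha hs, div_div_eq_mul_div, setLIntegral_const,
          Real.volume_Ioc, ← ofReal_mul hL.le, ← ofReal_add (by positivity) (by positivity)]
        congr 1
        field_simp
        ring

section WeakL1

variable {X : Type*} [MeasurableSpace X] {μ : Measure X}

theorem ofReal_mul_measure_le_weakL1 (h : X → ℂ) {t : ℝ} (ht : 0 < t) :
    ENNReal.ofReal t * μ {x | t < ‖h x‖} ≤ weakL1 μ h :=
  le_iSup₂ (f := fun t (_ : t ∈ Ioi 0) => ENNReal.ofReal t * μ {x | t < ‖h x‖}) t ht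

theorem measure_lt_norm_le_of_weakL1_le {h : X → ℂ} {γ u : ℝ}
    (hγ : weakL1 μ h ≤ ENNReal.ofReal γ) (hu : 0 < u) :
    μ {x | u < ‖h x‖} ≤ ENNReal.ofReal (γ / u) := by
  rw [ofReal_div_of_pos hu, ENNReal.le_div_iff_mul_le (by simp [hu]) (by simp), mul_comm]
  exact (ofReal_mul_measure_le_weakL1 h hu).trans hγ

theorem weakL1_le_of_forall_measure_ne_top [SigmaFinite μ] {h : X → ℂ} {C : ℝ≥0∞}
    (H : ∀ t : ℝ, 0 < t → ∀ E ⊆ {x | t < ‖h x‖}, μ E ≠ ∞ → ENNReal.ofReal t * μ E ≤ C) :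
    weakL1 μ h ≤ C := by
  refine iSup₂_le fun t ht => ?_
  rw [← Measure.iSup_restrict_spanningSets, ENNReal.mul_iSup]
  refine iSup_le fun i => ?_
  rw [Measure.restrict_apply' (measurableSet_spanningSets μ i)]
  exact H t ht _ inter_subset_left
    ((measure_mono inter_subset_right).trans_lt (measure_spanningSets_lt_top μ i)).ne

theorem setLIntegral_ofReal_min_le {g : X → ℝ} (hg : Measurable g) (hg0 : 0 ≤ g)
    {γ L s : ℝ} (hγ : 0 < γ) (hL : 0 < L) (hs : γ / L ≤ s) {E : Set X}
    (hE : μ E ≤ ENNReal.ofReal L)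
    (hdist : ∀ u : ℝ, 0 < u → μ {x | u < g x} ≤ ENNReal.ofReal (γ / u)) :
    ∫⁻ x in E, ENNReal.ofReal (min (g x) s) ∂μ ≤
      ENNReal.ofReal (γ * (1 + Real.log (s * L / γ))) := by
  have hs0 : 0 ≤ s := (div_pos hγ hL).le.trans hs
  rw [lintegral_eq_lintegral_meas_lt _ (ae_of_all _ fun x => le_min (hg0 x) hs0)
    (hg.min measurable_const).aemeasurable]
  calc ∫⁻ u in Ioi 0, μ.restrict E {x | u < min (g x) s}
      ≤ ∫⁻ u in Ioi 0, (Ioc 0 s).indicator (fun u => ENNReal.ofReal (min L (γ / u))) u := by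
        refine setLIntegral_mono' measurableSet_Ioi fun u hu => ?_
        by_cases hus : u ≤ s
        · rw [indicator_of_mem (show u ∈ Ioc 0 s from ⟨hu, hus⟩), ofReal_min]
          refine le_min ((measure_mono (subset_univ _)).trans ?_) ?_
          · rwa [Measure.restrict_apply_univ]
          · exact (Measure.restrict_le_self _).trans <|
              (measure_mono fun x (hx : u < min (g x) s) => hx.trans_le (min_le_left _ _)).trans
                (hdist u hu)
        · have hempty : {x | u < min (g x) s} = ∅ :=
            eq_empty_of_forall_notMem fun x (hx : u < min (g x) s) =>
              hus (hx.trans_le (min_le_right _ _)).le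
          rw [hempty, measure_empty]
          exact zero_le
    _ = ∫⁻ u in Ioc 0 s, ENNReal.ofReal (min L (γ / u)) := by
        rw [lintegral_indicator measurableSet_Ioc, Measure.restrict_restrict measurableSet_Ioc,
          inter_eq_self_of_subset_left Ioc_subset_Ioi_self]
    _ ≤ _ := lintegral_Ioc_min_div_le hγ hL hs

theorem measure_biUnion_lt_norm_le {ι : Type*} {I : Finset ι} {f : ι → X → ℂ} {γ s : ι → ℝ}
    (hfγ : ∀ i ∈ I, weakL1 μ (f i) ≤ ENNReal.ofReal (γ i)) (hs : ∀ i ∈ I, 0 < s i) :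
    μ (⋃ i ∈ I, {x | s i < ‖f i x‖}) ≤ ∑ i ∈ I, ENNReal.ofReal (γ i / s i) :=
  (measure_biUnion_finset_le _ _).trans <|
    Finset.sum_le_sum fun i hi => measure_lt_norm_le_of_weakL1_le (hfγ i hi) (hs i hi)

theorem ofReal_mul_measure_sdiff_le {ι : Type*} {I : Finset ι} {f : ι → X → ℂ}
    (hmeas : ∀ i ∈ I, Measurable (f i)) {γ s : ι → ℝ} {L t : ℝ}
    (hγ : ∀ i ∈ I, 0 < γ i) (hL : 0 < L) (hs : ∀ i ∈ I, γ i / L ≤ s i)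
    (hfγ : ∀ i ∈ I, weakL1 μ (f i) ≤ ENNReal.ofReal (γ i))
    {E : Set X} (hEL : μ E ≤ ENNReal.ofReal L) (hE : E ⊆ {x | t < ‖∑ i ∈ I, f i x‖}) :
    ENNReal.ofReal t * μ (E \ ⋃ i ∈ I, {x | s i < ‖f i x‖}) ≤
      ∑ i ∈ I, ENNReal.ofReal (γ i * (1 + Real.log (s i * L / γ i))) := by
  set G : X → ℝ≥0∞ := fun x => ∑ i ∈ I, ENNReal.ofReal (min ‖f i x‖ (s i))
  have hG : ∀ i ∈ I, Measurable fun x => ENNReal.ofReal (min ‖f i x‖ (s i)) := fun i hi =>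
    ((hmeas i hi).norm.min measurable_const).ennreal_ofReal
  have hsub : E \ ⋃ i ∈ I, {x | s i < ‖f i x‖} ⊆ {x | ENNReal.ofReal t ≤ G x} ∩ E := by
    rintro x ⟨hxE, hxB⟩
    have hle : ∀ i ∈ I, ‖f i x‖ ≤ s i := fun i hi =>
      not_lt.1 fun h => hxB (mem_biUnion hi h)
    refine ⟨?_, hxE⟩
    calc ENNReal.ofReal t ≤ ENNReal.ofReal (∑ i ∈ I, ‖f i x‖) :=
          ofReal_le_ofReal ((hE hxE).le.trans (norm_sum_le _ _))
      _ = G x := by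
          rw [ofReal_sum_of_nonneg fun i _ => norm_nonneg _]
          exact Finset.sum_congr rfl fun i hi => by rw [min_eq_left (hle i hi)]
  calc ENNReal.ofReal t * μ (E \ ⋃ i ∈ I, {x | s i < ‖f i x‖})
      ≤ ENNReal.ofReal t * μ.restrict E {x | ENNReal.ofReal t ≤ G x} :=
        mul_le_mul_right ((measure_mono hsub).trans (Measure.le_restrict_apply _ _)) _
    _ ≤ ∫⁻ x in E, G x ∂μ :=
        mul_meas_ge_le_lintegral₀ (Finset.measurable_sum _ hG).aemeasurable _
    _ = ∑ i ∈ I, ∫⁻ x in E, ENNReal.ofReal (min ‖f i x‖ (s i)) ∂μ := lintegral_finsetSum _ hG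
    _ ≤ ∑ i ∈ I, ENNReal.ofReal (γ i * (1 + Real.log (s i * L / γ i))) :=
        Finset.sum_le_sum fun i hi =>
          setLIntegral_ofReal_min_le (hmeas i hi).norm (fun _ => norm_nonneg _) (hγ i hi) hL
            (hs i hi) hEL fun u hu => measure_lt_norm_le_of_weakL1_le (hfγ i hi) hu

theorem mul_toReal_measure_le_of_subset_lt_norm_sum {n : ℕ} {f : ℕ → X → ℂ}
    (hmeas : ∀ k ∈ Finset.Icc 1 n, Measurable (f k)) {γ : ℕ → ℝ}
    (hγ : ∀ k ∈ Finset.Icc 1 n, 0 < γ k)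
    (hfγ : ∀ k ∈ Finset.Icc 1 n, weakL1 μ (f k) ≤ ENNReal.ofReal (γ k))
    {t : ℝ} (ht : 0 < t) {E : Set X} (hE : E ⊆ {x | t < ‖∑ k ∈ Finset.Icc 1 n, f k x‖})
    (hEfin : μ E ≠ ∞) :
    t * (μ E).toReal ≤ 4 * ∑ k ∈ Finset.Icc 1 n, γ k * (1 + Real.log k) := by
  have hsum : 0 ≤ ∑ k ∈ Finset.Icc 1 n, γ k * (1 + Real.log k) :=
    Finset.sum_nonneg fun k hk => mul_nonneg (hγ k hk).le (one_add_log_natCast_nonneg k)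
  set L := (μ E).toReal
  obtain hL | hL : 0 = L ∨ 0 < L := (toReal_nonneg : 0 ≤ L).eq_or_lt
  · rw [← hL, mul_zero]
    positivity
  have hk1 : ∀ k ∈ Finset.Icc 1 n, 1 ≤ k := fun k hk => (Finset.mem_Icc.1 hk).1
  set B := ⋃ k ∈ Finset.Icc 1 n, {x | truncLevel (γ k) L k < ‖f k x‖}
  have htail : μ B ≤ ENNReal.ofReal (L / 4) := by
    refine (measure_biUnion_lt_norm_le hfγ fun k hk =>
      truncLevel_pos (hγ k hk) hL (hk1 k hk)).trans ?_
    rw [← ofReal_sum_of_nonneg fun k hk =>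
      (div_pos (hγ k hk) (truncLevel_pos (hγ k hk) hL (hk1 k hk))).le]
    exact ofReal_le_ofReal (sum_div_truncLevel_le hγ hL)
  have hmain : ENNReal.ofReal t * μ (E \ B) ≤
      ENNReal.ofReal (3 * ∑ k ∈ Finset.Icc 1 n, γ k * (1 + Real.log k)) := by
    refine (ofReal_mul_measure_sdiff_le hmeas hγ hL
      (fun k hk => div_le_truncLevel (hγ k hk) hL (hk1 k hk)) hfγ
      (ofReal_toReal hEfin).ge hE).trans_eq ?_
    rw [Finset.mul_sum, ofReal_sum_of_nonneg fun k hk =>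
      mul_nonneg zero_le_three (mul_nonneg (hγ k hk).le (one_add_log_natCast_nonneg k))]
    refine Finset.sum_congr rfl fun k hk => ?_
    rw [log_truncLevel_mul_div (hγ k hk) hL (hk1 k hk)]
    ring_nf
  have key : ENNReal.ofReal (t * L) ≤
      ENNReal.ofReal (t * (L / 4) + 3 * ∑ k ∈ Finset.Icc 1 n, γ k * (1 + Real.log k)) :=
    calc ENNReal.ofReal (t * L) = ENNReal.ofReal t * μ E := by
          rw [ofReal_mul ht.le, ofReal_toReal hEfin]
      _ ≤ ENNReal.ofReal t * (μ B + μ (E \ B)) :=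
          mul_le_mul_right ((measure_le_inter_add_sdiff μ _ _).trans
            (add_le_add_left (measure_mono inter_subset_right) _)) _
      _ ≤ ENNReal.ofReal t * ENNReal.ofReal (L / 4) +
            ENNReal.ofReal (3 * ∑ k ∈ Finset.Icc 1 n, γ k * (1 + Real.log k)) := by
          rw [mul_add]
          gcongr
      _ = _ := by rw [← ofReal_mul ht.le, ← ofReal_add (by positivity) (by positivity)]
  rw [ofReal_le_ofReal_iff (by positivity)] at key
  linarith

theorem ofReal_mul_measure_le_of_subset_lt_norm_sum {n : ℕ} {f : ℕ → X → ℂ}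
    (hmeas : ∀ k ∈ Finset.Icc 1 n, Measurable (f k))
    (hfin : ∀ k ∈ Finset.Icc 1 n, weakL1 μ (f k) < ∞)
    {t : ℝ} (ht : 0 < t) {E : Set X} (hE : E ⊆ {x | t < ‖∑ k ∈ Finset.Icc 1 n, f k x‖})
    (hEfin : μ E ≠ ∞) :
    ENNReal.ofReal t * μ E ≤
      4 * ∑ k ∈ Finset.Icc 1 n, weakL1 μ (f k) * ENNReal.ofReal (1 + Real.log k) := by
  set w : ℕ → ℝ := fun k => (weakL1 μ (f k)).toReal
  have hw : ∀ k ∈ Finset.Icc 1 n, weakL1 μ (f k) = ENNReal.ofReal (w k) :=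
    fun k hk => (ofReal_toReal (hfin k hk).ne).symm
  set F : ℝ → ℝ := fun ε => 4 * ∑ k ∈ Finset.Icc 1 n, (w k + ε) * (1 + Real.log k)
  -- `γ k = w k + ε > 0` avoids dividing by a vanishing weak norm; then let `ε → 0`.
  have hε : ∀ ε : ℝ, 0 < ε → t * (μ E).toReal ≤ F ε := fun ε hε =>
    mul_toReal_measure_le_of_subset_lt_norm_sum hmeas
      (fun k _ => add_pos_of_nonneg_of_pos toReal_nonneg hε)
      (fun k hk => (hw k hk).le.trans (ofReal_le_ofReal (by linarith))) ht hE hEfin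
  have hF : Tendsto F (𝓝[>] 0) (𝓝 (F 0)) :=
    (Continuous.tendsto (by fun_prop) 0).mono_left nhdsWithin_le_nhds
  have hlim : t * (μ E).toReal ≤ F 0 := ge_of_tendsto hF (eventually_nhdsWithin_of_forall hε)
  calc ENNReal.ofReal t * μ E = ENNReal.ofReal (t * (μ E).toReal) := by
        rw [ofReal_mul ht.le, ofReal_toReal hEfin]
    _ ≤ ENNReal.ofReal (F 0) := ofReal_le_ofReal hlim
    _ = 4 * ∑ k ∈ Finset.Icc 1 n, weakL1 μ (f k) * ENNReal.ofReal (1 + Real.log k) := by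
        rw [ofReal_mul zero_le_four, ofReal_ofNat, ofReal_sum_of_nonneg fun k _ =>
          mul_nonneg (add_nonneg toReal_nonneg le_rfl) (one_add_log_natCast_nonneg k)]
        refine congrArg _ (Finset.sum_congr rfl fun k hk => ?_)
        rw [add_zero, ofReal_mul toReal_nonneg, ← hw k hk]

end WeakL1

theorem stmt1_general {X : Type*} [MeasurableSpace X] (μ : Measure X) [SigmaFinite μ]
    (n : ℕ) (f : ℕ → X → ℂ)
    (hmeas : ∀ k ∈ Finset.Icc 1 n, Measurable (f k))
    (hfin : ∀ k ∈ Finset.Icc 1 n, weakL1 μ (f k) < ∞) :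
    weakL1 μ (fun x => ∑ k ∈ Finset.Icc 1 n, f k x)
      ≤ 4 * ∑ k ∈ Finset.Icc 1 n, weakL1 μ (f k) * ENNReal.ofReal (1 + Real.log k) :=
  weakL1_le_of_forall_measure_ne_top fun _ ht _ hE hEfin =>
    ofReal_mul_measure_le_of_subset_lt_norm_sum hmeas hfin ht hE hEfin

/-- Let `(X, μ)` be a σ-finite measure space, `n ≥ 1`, and
`f_1, …, f_n : X → ℂ` measurable with `‖f_k‖_{1,∞} < ∞`. Then
`‖∑_{k=1}^n f_k‖_{1,∞} ≤ 4 · ∑_{k=1}^n ‖f_k‖_{1,∞} · (1 + log k)`. -/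
theorem stmt1 {X : Type*} [MeasurableSpace X] (μ : Measure X) [SigmaFinite μ]
    (n : ℕ) (hn : 1 ≤ n) (f : ℕ → X → ℂ)
    (hmeas : ∀ k ∈ Finset.Icc 1 n, Measurable (f k))
    (hfin : ∀ k ∈ Finset.Icc 1 n, weakL1 μ (f k) < ∞) :
    weakL1 μ (fun x => ∑ k ∈ Finset.Icc 1 n, f k x)
      ≤ 4 * ∑ k ∈ Finset.Icc 1 n, weakL1 μ (f k) * ENNReal.ofReal (1 + Real.log k) :=
  stmt1_general μ n f hmeas hfin
end

section
/- Let (X, μ) be a σ-finite measure space and let f_k : X → ℂ, k ≥ 1, be measurable functions such that ∑_{k=1}^∞ ‖f_k‖_{1,∞}·(1 + log k) < ∞. Suppose f : X → ℂ is measurable and that for μ-almost every x the series ∑_{k=1}^∞ f_k(x) converges to f(x). Then ‖f‖_{1,∞} ≤ 4·∑_{k=1}^∞ ‖f_k‖_{1,∞}·(1 + log k). -/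
/-!
Fix `t > 0` and a set `E ⊆ {|F| > t}` of finite measure `m`, and truncate `f_{j+1}` at the level
`τ_j = (‖f_{j+1}‖_{1,∞} / m) · e² (j+1)²`. By Chebyshev the exceptional set where some `|f_{j+1}|`
exceeds `τ_j` has measure at most `m · ∑ 1 / (e² (j+1)²) ≤ m / 4`. Off it,
`t ≤ ∑ min (|f_{j+1}|, τ_j)`, and the layer-cake formula bounds
`∫_E min (|f_{j+1}|, τ_j) ≤ ‖f_{j+1}‖_{1,∞} (1 + log (e² (j+1)²)) ≤ 3 ‖f_{j+1}‖_{1,∞} (1 + log (j+1))`.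
Hence `t m ≤ t m / 4 + 3 S`, i.e. `t m ≤ 4 S`, and σ-finiteness lets `E` exhaust `{|F| > t}`.
-/

open MeasureTheory ENNReal Filter Set

section WeakL1

variable {X : Type*} [MeasurableSpace X] {μ : Measure X} {g : X → ℂ}

theorem measure_lt_norm_le_weakL1_div_of_pos {t : ℝ} (ht : 0 < t) :
    μ {x | t < ‖g x‖} ≤ weakL1 μ g / ENNReal.ofReal t := by
  rw [ENNReal.le_div_iff_mul_le (by simp [ht]) (by simp), mul_comm]
  exact le_biSup (fun s => ENNReal.ofReal s * μ {x | s < ‖g x‖}) ht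

theorem measure_lt_norm_le_weakL1_div {t : ℝ} (ht : 0 ≤ t) :
    μ {x | t < ‖g x‖} ≤ weakL1 μ g / ENNReal.ofReal t := by
  rcases ht.lt_or_eq with ht | rfl
  · exact measure_lt_norm_le_weakL1_div_of_pos ht
  rcases eq_or_ne (weakL1 μ g) 0 with h0 | h0
  · have hsub : {x | (0 : ℝ) < ‖g x‖} ⊆ ⋃ n : ℕ, {x | ((n : ℝ) + 1)⁻¹ < ‖g x‖} := by
      intro x hx
      obtain ⟨n, hn⟩ := exists_nat_gt (‖g x‖)⁻¹
      exact mem_iUnion.2 ⟨n, (inv_lt_comm₀ (by positivity) hx).2 (hn.trans (lt_add_one _))⟩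
    rw [h0, ENNReal.zero_div]
    refine (measure_mono_null hsub (measure_iUnion_null (μ := μ) fun n => ?_)).le
    simpa [h0] using measure_lt_norm_le_weakL1_div_of_pos (μ := μ) (g := g)
      (t := ((n : ℝ) + 1)⁻¹) (by positivity)
  · simp [ENNReal.div_zero h0]

theorem measure_weakL1_level_lt_norm_le {m : ℝ≥0∞} (hA : weakL1 μ g ≠ ∞) (hm0 : m ≠ 0)
    (hm : m ≠ ∞) {c : ℝ} (hc : 0 < c) :
    μ {x | (weakL1 μ g / m).toReal * c < ‖g x‖} ≤ m / ENNReal.ofReal c := by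
  have hlevel : ENNReal.ofReal ((weakL1 μ g / m).toReal * c)
      = weakL1 μ g / m * ENNReal.ofReal c := by
    rw [ENNReal.ofReal_mul ENNReal.toReal_nonneg,
      ENNReal.ofReal_toReal (ENNReal.div_ne_top hA hm0)]
  refine (measure_lt_norm_le_weakL1_div (by positivity)).trans ?_
  rw [hlevel]
  refine ENNReal.div_le_of_le_mul (le_of_eq ?_)
  calc weakL1 μ g = m * (weakL1 μ g / m) * (ENNReal.ofReal c / ENNReal.ofReal c) := by
        rw [ENNReal.mul_div_cancel hm0 hm,
          ENNReal.div_self (by simpa using hc) ENNReal.ofReal_ne_top, mul_one]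
    _ = m / ENNReal.ofReal c * (weakL1 μ g / m * ENNReal.ofReal c) := by
        simp only [div_eq_mul_inv]; ring

theorem setLIntegral_ofReal_min_norm_le (hg : AEMeasurable g μ) (E : Set X) {a T : ℝ}
    (ha : 0 < a) (haT : a ≤ T) :
    ∫⁻ x in E, ENNReal.ofReal (min ‖g x‖ T) ∂μ
      ≤ ENNReal.ofReal a * μ E + weakL1 μ g * ENNReal.ofReal (Real.log (T / a)) := by
  have hT : 0 < T := ha.trans_le haT
  rw [lintegral_eq_lintegral_meas_lt _ (ae_of_all _ fun x => le_min (norm_nonneg _) hT.le)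
      (hg.restrict.norm.min aemeasurable_const),
    ← Ioc_union_Ioi_eq_Ioi ha.le, lintegral_union measurableSet_Ioi (Ioc_disjoint_Ioi le_rfl),
    ← Ioc_union_Ioi_eq_Ioi haT, lintegral_union measurableSet_Ioi (Ioc_disjoint_Ioi le_rfl)]
  have hlow : ∫⁻ s in Ioc 0 a, μ.restrict E {x | s < min ‖g x‖ T} ≤ ENNReal.ofReal a * μ E :=
    calc _ ≤ ∫⁻ _ in Ioc 0 a, μ E :=
          lintegral_mono fun s => (measure_mono (subset_univ _)).trans_eq
            (Measure.restrict_apply_univ E)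
      _ = _ := by rw [setLIntegral_const, Real.volume_Ioc, sub_zero, mul_comm]
  have hmid : ∫⁻ s in Ioc a T, μ.restrict E {x | s < min ‖g x‖ T}
      ≤ weakL1 μ g * ENNReal.ofReal (Real.log (T / a)) := by
    have hinv : IntegrableOn (fun s : ℝ => s⁻¹) (Ioc a T) :=
      (intervalIntegrable_inv_iff.2 (Or.inr fun h => by
        rw [uIcc_of_le haT] at h; exact ha.not_ge h.1)).1
    calc _ ≤ ∫⁻ s in Ioc a T, weakL1 μ g * ENNReal.ofReal s⁻¹ := by
          refine setLIntegral_mono (by fun_prop) fun s hs => ?_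
          have hs0 : 0 < s := ha.trans hs.1
          calc μ.restrict E {x | s < min ‖g x‖ T} ≤ μ {x | s < ‖g x‖} :=
                (Measure.le_iff'.1 Measure.restrict_le_self _).trans
                  (measure_mono fun x (hx : s < min ‖g x‖ T) => hx.trans_le (min_le_left _ _))
            _ ≤ _ := measure_lt_norm_le_weakL1_div_of_pos hs0
            _ = _ := by rw [div_eq_mul_inv, ENNReal.ofReal_inv_of_pos hs0]
      _ = weakL1 μ g * ENNReal.ofReal (∫ s in a..T, s⁻¹) := by
          rw [lintegral_const_mul _ (by fun_prop), intervalIntegral.integral_of_le haT,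
            ofReal_integral_eq_lintegral_ofReal hinv
              ((ae_restrict_iff' measurableSet_Ioc).2 (ae_of_all _ fun s hs =>
                inv_nonneg.2 (ha.trans hs.1).le))]
      _ = _ := by rw [integral_inv_of_pos ha hT]
  have hhigh : ∫⁻ s in Ioi T, μ.restrict E {x | s < min ‖g x‖ T} = 0 := by
    refine (setLIntegral_congr_fun measurableSet_Ioi fun s (hs : T < s) => ?_).trans
      lintegral_zero
    have hempty : {x | s < min ‖g x‖ T} = ∅ :=
      eq_empty_of_forall_notMem fun x (hx : s < min ‖g x‖ T) =>
        lt_asymm hs (hx.trans_le (min_le_right _ _))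
    rw [hempty, measure_empty]
  rw [hhigh, add_zero]
  exact add_le_add hlow hmid

theorem setLIntegral_ofReal_min_norm_weakL1_level_le (hg : AEMeasurable g μ) (E : Set X)
    {c : ℝ} (hc : 1 ≤ c) :
    ∫⁻ x in E, ENNReal.ofReal (min ‖g x‖ ((weakL1 μ g / μ E).toReal * c)) ∂μ
      ≤ weakL1 μ g * ENNReal.ofReal (1 + Real.log c) := by
  rcases (ENNReal.toReal_nonneg : 0 ≤ (weakL1 μ g / μ E).toReal).eq_or_lt with ha | ha
  · simp [← ha]
  obtain ⟨hpos, hfin⟩ := ENNReal.toReal_pos_iff.1 ha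
  have hE0 : μ E ≠ 0 := fun h => by simp_all
  have hE : μ E ≠ ∞ := fun h => by simp_all
  have hmass : ENNReal.ofReal (weakL1 μ g / μ E).toReal * μ E = weakL1 μ g := by
    rw [ENNReal.ofReal_toReal hfin.ne, ENNReal.div_mul_cancel hE0 hE]
  calc _ ≤ _ := setLIntegral_ofReal_min_norm_le hg E ha (le_mul_of_one_le_right ha.le hc)
    _ = weakL1 μ g * ENNReal.ofReal (1 + Real.log c) := by
      rw [hmass, mul_div_cancel_left₀ c ha.ne',
        ENNReal.ofReal_add zero_le_one (Real.log_nonneg hc), ENNReal.ofReal_one, mul_add, mul_one]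

end WeakL1

theorem tsum_inv_ofReal_exp_two_mul_sq_le :
    ∑' j : ℕ, (ENNReal.ofReal (Real.exp 2 * ((j : ℝ) + 1) ^ 2))⁻¹ ≤ 4⁻¹ := by
  have hbasel : HasSum (fun j : ℕ => (Real.exp 2)⁻¹ * (((j : ℝ) + 1) ^ 2)⁻¹)
      ((Real.exp 2)⁻¹ * (Real.pi ^ 2 / 6)) := by
    refine HasSum.mul_left _ ?_
    simpa using (hasSum_nat_add_iff' 1).2 hasSum_zeta_two
  have hexp : (7 : ℝ) ≤ Real.exp 2 := by
    have h : Real.exp 2 = Real.exp 1 * Real.exp 1 := by rw [← Real.exp_add]; norm_num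
    nlinarith [Real.exp_one_gt_d9]
  have hpi : Real.pi ^ 2 < 10 := by nlinarith [Real.pi_pos, Real.pi_lt_d2]
  calc ∑' j : ℕ, (ENNReal.ofReal (Real.exp 2 * ((j : ℝ) + 1) ^ 2))⁻¹
      = ENNReal.ofReal ((Real.exp 2)⁻¹ * (Real.pi ^ 2 / 6)) := by
        rw [← hbasel.tsum_eq,
          ENNReal.ofReal_tsum_of_nonneg (fun j => by positivity) hbasel.summable]
        exact tsum_congr fun j => by rw [← mul_inv, ENNReal.ofReal_inv_of_pos (by positivity)]
    _ ≤ ENNReal.ofReal 4⁻¹ := by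
        gcongr
        calc (Real.exp 2)⁻¹ * (Real.pi ^ 2 / 6) ≤ 7⁻¹ * (10 / 6) := by gcongr
          _ ≤ 4⁻¹ := by norm_num
    _ = 4⁻¹ := by rw [ENNReal.ofReal_inv_of_pos (by norm_num)]; norm_num

theorem one_le_exp_two_mul_sq (j : ℕ) : 1 ≤ Real.exp 2 * ((j : ℝ) + 1) ^ 2 :=
  one_le_mul_of_one_le_of_one_le (Real.one_le_exp (by norm_num))
    (one_le_pow₀ (by linarith [j.cast_nonneg (α := ℝ)]))

theorem ofReal_one_add_log_exp_two_mul_sq_le (j : ℕ) :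
    ENNReal.ofReal (1 + Real.log (Real.exp 2 * ((j : ℝ) + 1) ^ 2))
      ≤ 3 * ENNReal.ofReal (1 + Real.log ((j : ℝ) + 1)) := by
  have hlog : 0 ≤ Real.log ((j : ℝ) + 1) := by simpa using Real.log_natCast_nonneg (j + 1)
  rw [← ENNReal.ofReal_ofNat 3, ← ENNReal.ofReal_mul (by norm_num)]
  refine ENNReal.ofReal_le_ofReal ?_
  rw [Real.log_mul (Real.exp_ne_zero 2) (by positivity), Real.log_exp, Real.log_pow]
  push_cast
  linarith

theorem ofReal_norm_le_tsum_of_tendsto {E : Type*} [SeminormedAddCommGroup E] {f : ℕ → E}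
    {s : E} (h : Tendsto (fun N => ∑ k ∈ Finset.Icc 1 N, f k) atTop (nhds s)) :
    ENNReal.ofReal ‖s‖ ≤ ∑' j : ℕ, ENNReal.ofReal ‖f (j + 1)‖ := by
  refine le_of_tendsto'
    ((ENNReal.continuous_ofReal.tendsto _).comp ((continuous_norm.tendsto _).comp h)) fun N => ?_
  calc ENNReal.ofReal ‖∑ k ∈ Finset.Icc 1 N, f k‖
      ≤ ∑ k ∈ Finset.Icc 1 N, ENNReal.ofReal ‖f k‖ := by
        rw [← ENNReal.ofReal_sum_of_nonneg fun _ _ => norm_nonneg _]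
        exact ENNReal.ofReal_le_ofReal (norm_sum_le _ _)
    _ = ∑ j ∈ Finset.range N, ENNReal.ofReal ‖f (j + 1)‖ := by
        rw [← Finset.Ico_add_one_right_eq_Icc, Finset.sum_Ico_eq_sum_range, Nat.add_sub_cancel]
        simp only [add_comm 1]
    _ ≤ _ := ENNReal.sum_le_tsum _

theorem ENNReal.le_four_mul_of_le_mul_inv_four_add {x s : ℝ≥0∞} (hx : x ≠ ∞)
    (h : x ≤ x * 4⁻¹ + 3 * s) : x ≤ 4 * s := by
  rcases eq_or_ne s ∞ with rfl | hs
  · simp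
  lift x to NNReal using hx
  lift s to NNReal using hs
  have h4 : ((4 : NNReal) : ℝ≥0∞)⁻¹ = ((4⁻¹ : NNReal) : ℝ≥0∞) :=
    (ENNReal.coe_inv (by norm_num)).symm
  rw [show (4 : ℝ≥0∞) = ((4 : NNReal) : ℝ≥0∞) from rfl, h4] at h
  norm_cast at h ⊢
  rw [← NNReal.coe_le_coe] at h ⊢
  push_cast at h ⊢
  linarith

section Series

variable {X : Type*} [MeasurableSpace X] {μ : Measure X} {f : ℕ → X → ℂ} {F : X → ℂ}

/-- The weights `e² (j+1)²` are chosen so that `∑ 1 / (e² (j+1)²) ≤ 1/4`, while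
`1 + log (e² (j+1)²) ≤ 3 (1 + log (j+1))`. -/
def exceptionalSet (μ : Measure X) (f : ℕ → X → ℂ) (m : ℝ≥0∞) : Set X :=
  ⋃ j : ℕ, {x | (weakL1 μ (f (j + 1)) / m).toReal * (Real.exp 2 * ((j : ℝ) + 1) ^ 2)
    < ‖f (j + 1) x‖}

theorem measure_exceptionalSet_le (hA : ∀ j, weakL1 μ (f (j + 1)) ≠ ∞) {m : ℝ≥0∞}
    (hm0 : m ≠ 0) (hm : m ≠ ∞) : μ (exceptionalSet μ f m) ≤ m * 4⁻¹ :=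
  calc _ ≤ ∑' j : ℕ, m / ENNReal.ofReal (Real.exp 2 * ((j : ℝ) + 1) ^ 2) :=
        (measure_iUnion_le _).trans (ENNReal.tsum_le_tsum fun j =>
          measure_weakL1_level_lt_norm_le (hA j) hm0 hm (by positivity))
    _ = m * ∑' j : ℕ, (ENNReal.ofReal (Real.exp 2 * ((j : ℝ) + 1) ^ 2))⁻¹ := by
        simp only [div_eq_mul_inv, ENNReal.tsum_mul_left]
    _ ≤ m * 4⁻¹ := by gcongr; exact tsum_inv_ofReal_exp_two_mul_sq_le

theorem ofReal_mul_measure_diff_exceptionalSet_le (hf : ∀ j, Measurable (f (j + 1)))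
    (hdom : ∀ᵐ x ∂μ, ENNReal.ofReal ‖F x‖ ≤ ∑' j : ℕ, ENNReal.ofReal ‖f (j + 1) x‖)
    {t : ℝ} {E : Set X} (hE : MeasurableSet E) (hEF : E ⊆ {x | t < ‖F x‖}) :
    ENNReal.ofReal t * μ (E \ exceptionalSet μ f (μ E))
      ≤ 3 * ∑' k : ℕ, weakL1 μ (f (k + 1)) * ENNReal.ofReal (1 + Real.log (k + 1)) := by
  set τ : ℕ → ℝ := fun j =>
    (weakL1 μ (f (j + 1)) / μ E).toReal * (Real.exp 2 * ((j : ℝ) + 1) ^ 2)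
  set E' := E \ exceptionalSet μ f (μ E)
  have hE' : MeasurableSet E' :=
    hE.diff (.iUnion fun j => measurableSet_lt measurable_const (hf j).norm)
  have htrunc : ∀ᵐ x ∂μ.restrict E',
      ENNReal.ofReal t ≤ ∑' j, ENNReal.ofReal (min ‖f (j + 1) x‖ (τ j)) := by
    rw [ae_restrict_iff' hE']
    filter_upwards [hdom] with x hx hxE'
    have hgood : ∀ j, ‖f (j + 1) x‖ ≤ τ j := fun j =>
      le_of_not_gt fun h => hxE'.2 (mem_iUnion.2 ⟨j, h⟩)
    calc ENNReal.ofReal t ≤ ENNReal.ofReal ‖F x‖ := ENNReal.ofReal_le_ofReal (hEF hxE'.1).le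
      _ ≤ _ := hx
      _ = _ := tsum_congr fun j => by rw [min_eq_left (hgood j)]
  calc ENNReal.ofReal t * μ E' = ∫⁻ _ in E', ENNReal.ofReal t ∂μ := (setLIntegral_const _ _).symm
    _ ≤ ∫⁻ x in E', ∑' j, ENNReal.ofReal (min ‖f (j + 1) x‖ (τ j)) ∂μ := lintegral_mono_ae htrunc
    _ = ∑' j, ∫⁻ x in E', ENNReal.ofReal (min ‖f (j + 1) x‖ (τ j)) ∂μ :=
        lintegral_tsum fun j => ((hf j).norm.min measurable_const).ennreal_ofReal.aemeasurable
    _ ≤ ∑' j, ∫⁻ x in E, ENNReal.ofReal (min ‖f (j + 1) x‖ (τ j)) ∂μ :=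
        ENNReal.tsum_le_tsum fun j => lintegral_mono_set sdiff_subset
    _ ≤ ∑' j : ℕ, weakL1 μ (f (j + 1)) * (3 * ENNReal.ofReal (1 + Real.log (j + 1))) :=
        ENNReal.tsum_le_tsum fun j =>
          (setLIntegral_ofReal_min_norm_weakL1_level_le (hf j).aemeasurable E
            (one_le_exp_two_mul_sq j)).trans
          (by gcongr; exact ofReal_one_add_log_exp_two_mul_sq_le j)
    _ = _ := by simp only [mul_left_comm _ (3 : ℝ≥0∞), ENNReal.tsum_mul_left]

theorem ofReal_mul_measure_le_four_mul_tsum (hf : ∀ j, Measurable (f (j + 1)))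
    (hA : ∀ j, weakL1 μ (f (j + 1)) ≠ ∞)
    (hdom : ∀ᵐ x ∂μ, ENNReal.ofReal ‖F x‖ ≤ ∑' j : ℕ, ENNReal.ofReal ‖f (j + 1) x‖)
    {t : ℝ} {E : Set X} (hE : MeasurableSet E) (hEfin : μ E ≠ ∞) (hEF : E ⊆ {x | t < ‖F x‖}) :
    ENNReal.ofReal t * μ E
      ≤ 4 * ∑' k : ℕ, weakL1 μ (f (k + 1)) * ENNReal.ofReal (1 + Real.log (k + 1)) := by
  rcases eq_or_ne (μ E) 0 with hE0 | hE0
  · simp [hE0]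
  refine ENNReal.le_four_mul_of_le_mul_inv_four_add (ENNReal.mul_ne_top ofReal_ne_top hEfin) ?_
  set S := ∑' k : ℕ, weakL1 μ (f (k + 1)) * ENNReal.ofReal (1 + Real.log (k + 1))
  set U := exceptionalSet μ f (μ E)
  calc ENNReal.ofReal t * μ E ≤ ENNReal.ofReal t * (μ (E \ U) + μ U) := by
        gcongr
        exact (measure_mono (subset_sdiff_union E U)).trans (measure_union_le _ _)
    _ = ENNReal.ofReal t * μ (E \ U) + ENNReal.ofReal t * μ U := mul_add _ _ _
    _ ≤ 3 * S + ENNReal.ofReal t * (μ E * 4⁻¹) :=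
        add_le_add (ofReal_mul_measure_diff_exceptionalSet_le hf hdom hE hEF)
          (mul_le_mul_right (measure_exceptionalSet_le hA hE0 hEfin) _)
    _ = ENNReal.ofReal t * μ E * 4⁻¹ + 3 * S := by rw [add_comm, mul_assoc]

end Series

/-- Let `(X, μ)` be σ-finite and `f_k : X → ℂ`, `k ≥ 1`, be measurable with
`∑_{k=1}^∞ ‖f_k‖_{1,∞} · (1 + log k) < ∞`. If `f` is measurable and for μ-a.e. `x` the series
`∑_{k=1}^∞ f_k(x)` converges to `f(x)`, then
`‖f‖_{1,∞} ≤ 4 · ∑_{k=1}^∞ ‖f_k‖_{1,∞} · (1 + log k)`. -/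
theorem stmt2 {X : Type*} [MeasurableSpace X] (μ : Measure X) [SigmaFinite μ]
    (f : ℕ → X → ℂ) (F : X → ℂ)
    (hmeas : ∀ k, 1 ≤ k → Measurable (f k)) (hF : Measurable F)
    (hfin : ∑' k : ℕ, weakL1 μ (f (k + 1)) * ENNReal.ofReal (1 + Real.log (k + 1)) < ∞)
    (hconv : ∀ᵐ x ∂μ, Tendsto (fun N => ∑ k ∈ Finset.Icc 1 N, f k x) atTop (nhds (F x))) :
    weakL1 μ F ≤ 4 * ∑' k : ℕ, weakL1 μ (f (k + 1)) * ENNReal.ofReal (1 + Real.log (k + 1)) := by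
  have hf : ∀ j, Measurable (f (j + 1)) := fun j => hmeas (j + 1) j.succ_pos
  have hA : ∀ j, weakL1 μ (f (j + 1)) ≠ ∞ := fun j htop => by
    have hw : 0 < 1 + Real.log ((j : ℝ) + 1) := by
      linarith [show 0 ≤ Real.log ((j : ℝ) + 1) by simpa using Real.log_natCast_nonneg (j + 1)]
    refine ENNReal.ne_top_of_tsum_ne_top hfin.ne j ?_
    rw [htop, ENNReal.top_mul (ENNReal.ofReal_pos.2 hw).ne']
  have hdom : ∀ᵐ x ∂μ, ENNReal.ofReal ‖F x‖ ≤ ∑' j : ℕ, ENNReal.ofReal ‖f (j + 1) x‖ :=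
    hconv.mono fun x => ofReal_norm_le_tsum_of_tendsto
  refine iSup₂_le fun t _ => ?_
  rw [← Measure.iSup_restrict_spanningSets, ENNReal.mul_iSup]
  refine iSup_le fun n => ?_
  rw [Measure.restrict_apply' (measurableSet_spanningSets μ n)]
  exact ofReal_mul_measure_le_four_mul_tsum hf hA hdom
    ((measurableSet_lt measurable_const hF.norm).inter (measurableSet_spanningSets μ n))
    (measure_inter_lt_top_of_right_ne_top (measure_spanningSets_lt_top μ n).ne).ne
    inter_subset_left
end

section
/- Fix d ≥ 1 and 0 < p ≤ 2. Let φ : ℝ^d → ℂ be a smooth (C^∞) function which vanishes outside [−3,3]^d and equals 1 on [0,1]^d. Then there is a constant C > 0 (depending only on d, p and φ) such that: for every integrable function h : ℝ^d → ℂ vanishing outside [0,1]^d, if ψ : ℝ^d → ℂ is defined by ψ(u) = φ(u)·(2π)^{−d/2}·∫_{ℝ^d} e^{i⟨u,x⟩} h(x) dx, and for k ∈ ℤ^d the Fourier coefficient is ψ̂(k) = (2π)^{−d}·∫_{[−π,π]^d} ψ(u)·e^{−i⟨k,u⟩} du, then ∑_{k∈ℤ^d} |ψ̂(k)|^p ≤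 C·‖h‖_{L¹(ℝ^d)}^p. -/
open MeasureTheory ENNReal Real
open scoped FourierTransform RealInnerProductSpace

namespace Stmt3Aux

lemma tsum_pi_prod (d : ℕ) (g : ℤ → ℝ≥0∞) :
    ∑' k : Fin d → ℤ, ∏ i, g (k i) = (∑' n : ℤ, g n) ^ d := by
  induction d with
  | zero =>
      rw [tsum_eq_single (fun i => 0) (fun b hb => absurd (Subsingleton.elim b _) hb)]
      simp
  | succ n ih =>
      rw [← (Fin.consEquiv fun _ : Fin (n+1) => ℤ).tsum_eq (fun k => ∏ i, g (k i))]
      rw [ENNReal.tsum_prod']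
      have hpt : ∀ (a : ℤ) (b : Fin n → ℤ),
          (∏ i, g (((Fin.consEquiv fun _ : Fin (n+1) => ℤ) (a, b)) i)) = g a * ∏ i, g (b i) := by
        intro a b
        rw [Fin.prod_univ_succ]
        simp [Fin.consEquiv]
      simp_rw [hpt, ENNReal.tsum_mul_left, ih, ENNReal.tsum_mul_right]
      rw [pow_succ]
      ring

lemma tsum_int_rpow_ne_top {q : ℝ} (hq : 1 < q) :
    ∑' n : ℤ, ENNReal.ofReal ((1 + |(n : ℝ)|) ^ (-q)) ≠ ⊤ := by
  have hsum := summable_abs_int_rpow hq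
  have hb : ∀ n : ℤ, ENNReal.ofReal ((1 + |(n:ℝ)|) ^ (-q)) ≤
      (if n = 0 then 1 else 0) + ENNReal.ofReal (|(n:ℝ)| ^ (-q)) := by
    intro n
    rcases eq_or_ne n 0 with rfl | hn
    · simp
    · have h1 : (0:ℝ) < |(n:ℝ)| := by
        simp [abs_pos, Int.cast_ne_zero, hn]
      have h2 : (1 + |(n:ℝ)|) ^ (-q) ≤ |(n:ℝ)| ^ (-q) :=
        Real.rpow_le_rpow_of_nonpos h1 (by linarith) (by linarith)
      simp only [hn, if_false, zero_add]
      exact ENNReal.ofReal_le_ofReal h2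
  have hle := ENNReal.tsum_le_tsum hb
  apply ne_top_of_le_ne_top _ hle
  rw [ENNReal.tsum_add, tsum_ite_eq,
    ← ENNReal.ofReal_tsum_of_nonneg (fun n => Real.rpow_nonneg (abs_nonneg _) _) hsum]
  exact ENNReal.add_ne_top.2 ⟨ENNReal.one_ne_top, ENNReal.ofReal_ne_top⟩

lemma abs_apply_le_norm {d : ℕ} (v : EuclideanSpace ℝ (Fin d)) (i : Fin d) : |v i| ≤ ‖v‖ := by
  rw [EuclideanSpace.norm_eq, ← Real.sqrt_sq_eq_abs]
  apply Real.sqrt_le_sqrt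
  have := Finset.single_le_sum (f := fun j => ‖v j‖ ^ 2) (fun j _ => by positivity)
    (Finset.mem_univ i)
  simpa [sq_abs] using this

lemma decay_bound (d : ℕ) (φ : EuclideanSpace ℝ (Fin d) → ℂ) (hφ : ContDiff ℝ (⊤ : ℕ∞) φ)
    (hcs : HasCompactSupport φ) (M : ℕ) :
    ∃ A : ℝ, 0 < A ∧ ∀ w, (1 + ‖w‖) ^ M * ‖𝓕 φ w‖ ≤ A := by
  have hint : ∀ (k n : ℕ), (k:ℕ∞) ≤ ⊤ → (n:ℕ∞) ≤ ⊤ →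
      Integrable (fun v : EuclideanSpace ℝ (Fin d) =>
        ‖v‖ ^ k * ‖iteratedFDeriv ℝ n φ v‖) volume := by
    intro k n _ _
    apply Continuous.integrable_of_hasCompactSupport
    · exact (continuous_norm.pow k).mul (hφ.continuous_iteratedFDeriv (by exact_mod_cast le_top)).norm
    · exact HasCompactSupport.mul_left ((hcs.iteratedFDeriv n).norm)
  have key : ∀ n : ℕ, ∃ R : ℝ, ∀ w, ‖w‖ ^ n * ‖𝓕 φ w‖ ≤ R := by
    intro n
    refine ⟨(2 * π) ^ (0:ℕ) * (2 * (0:ℕ) + 2) ^ n *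
      ∑ p ∈ Finset.range (0 + 1) ×ˢ Finset.range (n + 1),
        ∫ v, ‖v‖ ^ p.1 * ‖iteratedFDeriv ℝ p.2 φ v‖, fun w => ?_⟩
    have := Real.pow_mul_norm_iteratedFDeriv_fourier_le (K := (⊤:ℕ∞)) (N := (⊤:ℕ∞))
      (hφ.of_le (by simp)) hint (k := 0) (n := n) le_top le_top w
    simpa using this
  obtain ⟨R0, hR0⟩ := key 0
  obtain ⟨RM, hRM⟩ := key M
  have hR0' : ∀ w, ‖𝓕 φ w‖ ≤ R0 := fun w => by simpa using hR0 w
  have hR0nn : (0:ℝ) ≤ R0 := le_trans (norm_nonneg _) (hR0' 0)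
  have hRMnn : (0:ℝ) ≤ RM :=
    le_trans (mul_nonneg (pow_nonneg (norm_nonneg _) M) (norm_nonneg _)) (hRM 0)
  refine ⟨2 ^ M * (R0 + RM) + 1, by positivity, fun w => ?_⟩
  have h1 : (1 + ‖w‖) ^ M ≤ 2 ^ M * (1 + ‖w‖ ^ M) := by
    rcases le_total ‖w‖ 1 with h | h
    · have h1 : (1 + ‖w‖) ^ M ≤ 2 ^ M := pow_le_pow_left₀ (by positivity) (by linarith) M
      nlinarith [pow_nonneg (norm_nonneg w) M, pow_nonneg (by norm_num : (0:ℝ) ≤ 2) M]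
    · have h1 : (1 + ‖w‖) ^ M ≤ (2 * ‖w‖) ^ M := pow_le_pow_left₀ (by positivity) (by linarith) M
      rw [mul_pow] at h1
      nlinarith [pow_nonneg (by norm_num : (0:ℝ) ≤ 2) M, pow_nonneg (norm_nonneg w) M]
  have h2 := hR0' w
  have h3 := hRM w
  have h4 : (0:ℝ) ≤ ‖𝓕 φ w‖ := norm_nonneg _
  have h5 : (0:ℝ) ≤ (2:ℝ) ^ M := by positivity
  nlinarith [mul_le_mul_of_nonneg_right h1 h4, mul_le_mul_of_nonneg_left h3 h5,
    mul_le_mul_of_nonneg_left h2 h5]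

lemma inner_sum {d : ℕ} (u v : EuclideanSpace ℝ (Fin d)) : ⟪u, v⟫ = ∑ i, u i * v i := by
  simp [PiLp.inner_apply, RCLike.inner_apply, mul_comm]

lemma ft_formula (d : ℕ) (φ : EuclideanSpace ℝ (Fin d) → ℂ)
    (v : EuclideanSpace ℝ (Fin d)) :
    (∫ u : EuclideanSpace ℝ (Fin d),
        φ u * Complex.exp (Complex.I * ((∑ i, u i * v i : ℝ) : ℂ)))
      = 𝓕 φ ((-(2 * π)⁻¹) • v) := by
  rw [Real.fourier_eq']
  apply integral_congr_ae
  filter_upwards with u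
  have hin : ⟪u, ((-(2 * π)⁻¹ : ℝ)) • v⟫ = -(2 * π)⁻¹ * ⟪u, v⟫ :=
    real_inner_smul_right _ _ _
  have hπ : (2 * π) ≠ 0 := by positivity
  have hexp : (-2 * π * ⟪u, ((-(2 * π)⁻¹ : ℝ)) • v⟫ : ℝ) = ∑ i, u i * v i := by
    rw [hin, inner_sum]
    field_simp
  rw [smul_eq_mul, hexp]
  rw [mul_comm (φ u)]
  ring_nf

lemma norm_exp_I_mul (r : ℝ) : ‖Complex.exp (Complex.I * (r:ℂ))‖ = 1 := by
  rw [Complex.norm_exp]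
  simp

lemma norm_exp_neg_I_mul (r : ℝ) : ‖Complex.exp (-(Complex.I * (r:ℂ)))‖ = 1 := by
  rw [Complex.norm_exp]
  simp

lemma coord_bound (d N : ℕ) (φ : EuclideanSpace ℝ (Fin d) → ℂ) (A : ℝ)
    (hA : ∀ w : EuclideanSpace ℝ (Fin d), (1 + ‖w‖) ^ (d * N) * ‖𝓕 φ w‖ ≤ A)
    (k : Fin d → ℤ) (x : EuclideanSpace ℝ (Fin d)) (hx : ∀ i, 0 ≤ x i ∧ x i ≤ 1) :
    ‖𝓕 φ (((-(2 * π)⁻¹ : ℝ)) • (x - (WithLp.equiv 2 (Fin d → ℝ)).symm (fun i => (k i : ℝ))))‖ *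
      ∏ i, (1 + |(k i : ℝ)|) ^ N ≤ A * (4 * π) ^ (d * N) := by
  set kE : EuclideanSpace ℝ (Fin d) := (WithLp.equiv 2 (Fin d → ℝ)).symm (fun i => (k i : ℝ))
    with hkE
  set v : EuclideanSpace ℝ (Fin d) := x - kE with hv
  set w : EuclideanSpace ℝ (Fin d) := ((-(2 * π)⁻¹ : ℝ)) • v with hw
  have hπ : (3:ℝ) < π := Real.pi_gt_three
  have hvi : ∀ i, v i = x i - (k i : ℝ) := by
    intro i
    simp [hv, hkE, PiLp.toLp_apply]
  have h1 : ∀ i, (1 + |(k i : ℝ)|) ≤ 2 * (1 + ‖v‖) := by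
    intro i
    have hle : |v i| ≤ ‖v‖ := abs_apply_le_norm v i
    have habs : |(k i : ℝ)| - |x i| ≤ |v i| := by
      rw [hvi i, abs_sub_comm]
      exact abs_sub_abs_le_abs_sub _ _
    have hxi := hx i
    have hxabs : |x i| ≤ 1 := abs_le.2 ⟨by linarith [hxi.1, hxi.2], hxi.2⟩
    rcases eq_or_ne (k i) 0 with h0 | h0
    · rw [h0]
      simp only [Int.cast_zero, abs_zero]
      nlinarith [norm_nonneg v]
    · have : (1:ℝ) ≤ |(k i : ℝ)| := by
        rw [← Int.cast_abs]
        exact_mod_cast Int.one_le_abs h0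
      nlinarith [norm_nonneg v]
  have h2 : ∏ i, (1 + |(k i : ℝ)|) ≤ (2 * (1 + ‖v‖)) ^ d := by
    calc ∏ i, (1 + |(k i : ℝ)|) ≤ ∏ _i : Fin d, (2 * (1 + ‖v‖)) := by
          apply Finset.prod_le_prod
          · intro i _; positivity
          · intro i _; exact h1 i
      _ = (2 * (1 + ‖v‖)) ^ d := by simp
  have hnw : ‖v‖ = 2 * π * ‖w‖ := by
    rw [hw, norm_smul, Real.norm_eq_abs, abs_neg, abs_inv,
      abs_of_pos (by positivity : (0:ℝ) < 2 * π)]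
    field_simp
  have h3 : 2 * (1 + ‖v‖) ≤ 4 * π * (1 + ‖w‖) := by
    have hw0 : 0 ≤ ‖w‖ := norm_nonneg _
    rw [hnw]; nlinarith
  have h4 : ∏ i, (1 + |(k i : ℝ)|) ≤ (4 * π * (1 + ‖w‖)) ^ d :=
    h2.trans (pow_le_pow_left₀ (by positivity) h3 d)
  have h5 : ∏ i, ((1 + |(k i : ℝ)|)) ^ N ≤ (4 * π) ^ (d * N) * (1 + ‖w‖) ^ (d * N) := by
    rw [Finset.prod_pow]
    calc (∏ i, (1 + |(k i : ℝ)|)) ^ N ≤ ((4 * π * (1 + ‖w‖)) ^ d) ^ N := by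
          apply pow_le_pow_left₀ _ h4
          exact Finset.prod_nonneg fun i _ => by positivity
      _ = (4 * π) ^ (d * N) * (1 + ‖w‖) ^ (d * N) := by
          rw [← pow_mul, mul_pow, pow_mul, pow_mul]
  calc ‖𝓕 φ w‖ * ∏ i, (1 + |(k i : ℝ)|) ^ N
      ≤ ‖𝓕 φ w‖ * ((4 * π) ^ (d * N) * (1 + ‖w‖) ^ (d * N)) :=
        mul_le_mul_of_nonneg_left h5 (norm_nonneg _)
    _ = (4 * π) ^ (d * N) * ((1 + ‖w‖) ^ (d * N) * ‖𝓕 φ w‖) := by ring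
    _ ≤ (4 * π) ^ (d * N) * A := mul_le_mul_of_nonneg_left (hA w) (by positivity)
    _ = A * (4 * π) ^ (d * N) := by ring

lemma key_eq (d : ℕ) (φ h : EuclideanSpace ℝ (Fin d) → ℂ) (c2 : ℂ)
    (hφc : Continuous φ) (hφint : Integrable φ volume)
    (hφsupp : ∀ u : EuclideanSpace ℝ (Fin d), (∃ i, 3 < |u i|) → φ u = 0)
    (hh : Integrable h volume) (k : Fin d → ℤ) :
    (∫ u in {u : EuclideanSpace ℝ (Fin d) | ∀ i, -π ≤ u i ∧ u i ≤ π},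
        (φ u * c2 * ∫ x : EuclideanSpace ℝ (Fin d),
            Complex.exp (Complex.I * ((∑ i, u i * x i : ℝ) : ℂ)) * h x) *
          Complex.exp (-(Complex.I * ((∑ i, (k i : ℝ) * u i : ℝ) : ℂ))))
      = ∫ x : EuclideanSpace ℝ (Fin d), (c2 * h x) *
          𝓕 φ (((-(2 * π)⁻¹ : ℝ)) •
            (x - (WithLp.equiv 2 (Fin d → ℝ)).symm (fun i => (k i : ℝ)))) := by
  set kE : EuclideanSpace ℝ (Fin d) := (WithLp.equiv 2 (Fin d → ℝ)).symm (fun i => (k i : ℝ))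
    with hkE
  set Fk : EuclideanSpace ℝ (Fin d) → EuclideanSpace ℝ (Fin d) → ℂ := fun u x =>
    φ u * c2 * (Complex.exp (Complex.I * ((∑ i, u i * x i : ℝ) : ℂ)) * h x) *
      Complex.exp (-(Complex.I * ((∑ i, (k i : ℝ) * u i : ℝ) : ℂ))) with hFkdef
  have hπ : (3:ℝ) < π := Real.pi_gt_three
  -- the integrand vanishes outside the cube
  have hvan : ∀ u ∉ {u : EuclideanSpace ℝ (Fin d) | ∀ i, -π ≤ u i ∧ u i ≤ π},
      (φ u * c2 * ∫ x : EuclideanSpace ℝ (Fin d),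
          Complex.exp (Complex.I * ((∑ i, u i * x i : ℝ) : ℂ)) * h x) *
        Complex.exp (-(Complex.I * ((∑ i, (k i : ℝ) * u i : ℝ) : ℂ))) = 0 := by
    intro u hu
    simp only [Set.mem_setOf_eq, not_forall] at hu
    obtain ⟨i, hi⟩ := hu
    rw [not_and_or] at hi
    push_neg at hi
    have h3i : 3 < |u i| := by
      rcases hi with hi | hi
      · exact lt_abs.2 (Or.inr (by linarith))
      · exact lt_abs.2 (Or.inl (by linarith))
    rw [hφsupp u ⟨i, h3i⟩]
    ring
  -- integrability of the double integrand
  have hcsum : Continuous fun q : EuclideanSpace ℝ (Fin d) × EuclideanSpace ℝ (Fin d) =>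
      (∑ i, q.1 i * q.2 i : ℝ) :=
    continuous_finset_sum _ fun i _ =>
      (((PiLp.continuous_apply (p := 2) (β := fun _ : Fin d => ℝ) i).comp (continuous_fst)).mul
        ((PiLp.continuous_apply (p := 2) (β := fun _ : Fin d => ℝ) i).comp (continuous_snd)))
  have hcsum2 : Continuous fun u : EuclideanSpace ℝ (Fin d) => (∑ i, (k i : ℝ) * u i : ℝ) :=
    continuous_finset_sum _ fun i _ => continuous_const.mul (PiLp.continuous_apply (p := 2) (β := fun _ : Fin d => ℝ) i)
  have hmeas : AEStronglyMeasurable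
      (fun q : EuclideanSpace ℝ (Fin d) × EuclideanSpace ℝ (Fin d) => Fk q.1 q.2)
      (volume.prod volume) := by
    apply AEStronglyMeasurable.mul
    apply AEStronglyMeasurable.mul
    · exact ((hφc.comp continuous_fst).aestronglyMeasurable.mul aestronglyMeasurable_const)
    · exact ((Complex.continuous_exp.comp
        (continuous_const.mul (Complex.continuous_ofReal.comp hcsum))).aestronglyMeasurable.mul
        hh.1.comp_snd)
    · exact (Complex.continuous_exp.comp
        ((continuous_const.mul (Complex.continuous_ofReal.comp hcsum2)).comp
          continuous_fst).neg).aestronglyMeasurable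
  have hFk : Integrable
      (fun q : EuclideanSpace ℝ (Fin d) × EuclideanSpace ℝ (Fin d) => Fk q.1 q.2)
      (volume.prod volume) := by
    apply Integrable.mono' ((hφint.norm.mul_prod hh.norm).const_mul ‖c2‖) hmeas
    filter_upwards with q
    rw [hFkdef]
    simp only [norm_mul, norm_exp_I_mul, norm_exp_neg_I_mul, mul_one, one_mul]
    exact le_of_eq (by ring)
  -- inner u-integral evaluation
  have inner_eq : ∀ x : EuclideanSpace ℝ (Fin d),
      (∫ u, Fk u x) = (c2 * h x) * 𝓕 φ (((-(2 * π)⁻¹ : ℝ)) • (x - kE)) := by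
    intro x
    have hpt : ∀ u, Fk u x = (c2 * h x) *
        (φ u * Complex.exp (Complex.I * ((∑ i, u i * (x - kE) i : ℝ) : ℂ))) := by
      intro u
      have hsub : ∀ i, (x - kE) i = x i - (k i : ℝ) := by
        intro i
        simp [hkE, PiLp.toLp_apply]
      have hsum : ((∑ i, u i * (x - kE) i : ℝ) : ℂ)
          = ((∑ i, u i * x i : ℝ) : ℂ) - ((∑ i, (k i : ℝ) * u i : ℝ) : ℂ) := by
        push_cast
        rw [← Finset.sum_sub_distrib]
        apply Finset.sum_congr rfl
        intro i _
        rw [hsub i]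
        push_cast
        ring
      rw [hFkdef]
      simp only []
      rw [hsum]
      rw [mul_sub, Complex.exp_sub]
      rw [Complex.exp_neg]
      field_simp [Complex.exp_ne_zero]
    rw [integral_congr_ae (Filter.Eventually.of_forall hpt), integral_const_mul,
      ft_formula]
  -- assemble
  have hrw : ∀ u, (∫ x, Fk u x)
      = (φ u * c2 * ∫ x : EuclideanSpace ℝ (Fin d),
          Complex.exp (Complex.I * ((∑ i, u i * x i : ℝ) : ℂ)) * h x) *
        Complex.exp (-(Complex.I * ((∑ i, (k i : ℝ) * u i : ℝ) : ℂ))) := by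
    intro u
    rw [hFkdef]
    simp only []
    rw [integral_mul_const, integral_const_mul]
  calc (∫ u in {u : EuclideanSpace ℝ (Fin d) | ∀ i, -π ≤ u i ∧ u i ≤ π},
        (φ u * c2 * ∫ x : EuclideanSpace ℝ (Fin d),
            Complex.exp (Complex.I * ((∑ i, u i * x i : ℝ) : ℂ)) * h x) *
          Complex.exp (-(Complex.I * ((∑ i, (k i : ℝ) * u i : ℝ) : ℂ))))
      = ∫ u, (φ u * c2 * ∫ x : EuclideanSpace ℝ (Fin d),
            Complex.exp (Complex.I * ((∑ i, u i * x i : ℝ) : ℂ)) * h x) *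
          Complex.exp (-(Complex.I * ((∑ i, (k i : ℝ) * u i : ℝ) : ℂ))) :=
        setIntegral_eq_integral_of_forall_compl_eq_zero hvan
    _ = ∫ u, ∫ x, Fk u x := integral_congr_ae (Filter.Eventually.of_forall fun u => (hrw u).symm)
    _ = ∫ x, ∫ u, Fk u x := integral_integral_swap hFk
    _ = ∫ x : EuclideanSpace ℝ (Fin d), (c2 * h x) *
          𝓕 φ (((-(2 * π)⁻¹ : ℝ)) • (x - kE)) :=
        integral_congr_ae (Filter.Eventually.of_forall inner_eq)

end Stmt3Aux
/-- Fix `d ≥ 1` and `0 < p ≤ 2`. Let `φ : ℝ^d → ℂ` be smooth, vanishing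
outside `[−3,3]^d` and equal to `1` on `[0,1]^d`. Then there is `C > 0` (depending only on
`d`, `p`, `φ`) such that for every integrable `h : ℝ^d → ℂ` vanishing outside `[0,1]^d`,
the function `ψ(u) = φ(u) · (2π)^{−d/2} ∫ e^{i⟨u,x⟩} h(x) dx` has Fourier coefficients
`ψ̂(k) = (2π)^{−d} ∫_{[−π,π]^d} ψ(u) e^{−i⟨k,u⟩} du` satisfying
`∑_{k ∈ ℤ^d} |ψ̂(k)|^p ≤ C · ‖h‖₁^p`. -/
theorem stmt3 (d : ℕ) (hd : 1 ≤ d) (p : ℝ) (hp0 : 0 < p) (hp2 : p ≤ 2)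
    (φ : EuclideanSpace ℝ (Fin d) → ℂ) (hφ : ContDiff ℝ (⊤ : ℕ∞) φ)
    (hφsupp : ∀ u : EuclideanSpace ℝ (Fin d), (∃ i, 3 < |u i|) → φ u = 0)
    (hφone : ∀ u : EuclideanSpace ℝ (Fin d), (∀ i, 0 ≤ u i ∧ u i ≤ 1) → φ u = 1) :
    ∃ C : ℝ, 0 < C ∧
      ∀ h : EuclideanSpace ℝ (Fin d) → ℂ, Integrable h volume →
        (∀ x : EuclideanSpace ℝ (Fin d), (∃ i, x i < 0 ∨ 1 < x i) → h x = 0) →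
        ∑' k : Fin d → ℤ,
          ENNReal.ofReal
            (‖((((2 * Real.pi) ^ d : ℝ) : ℂ))⁻¹ *
                ∫ u in {u : EuclideanSpace ℝ (Fin d) | ∀ i, -Real.pi ≤ u i ∧ u i ≤ Real.pi},
                  (φ u * ((((2 * Real.pi) ^ ((d : ℝ) / 2) : ℝ) : ℂ))⁻¹ *
                      ∫ x : EuclideanSpace ℝ (Fin d),
                        Complex.exp (Complex.I * ((∑ i, u i * x i : ℝ) : ℂ)) * h x) *
                    Complex.exp (-(Complex.I * ((∑ i, (k i : ℝ) * u i : ℝ) : ℂ)))‖ ^ p)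
          ≤ ENNReal.ofReal (C * (∫ x : EuclideanSpace ℝ (Fin d), ‖h x‖) ^ p) := by
  classical
  have hπ : (3:ℝ) < π := Real.pi_gt_three
  -- compact support of φ
  have hcs : HasCompactSupport φ := by
    apply HasCompactSupport.intro
      (isCompact_closedBall (0 : EuclideanSpace ℝ (Fin d)) (3 * Real.sqrt d))
    intro x hx
    apply hφsupp
    by_contra hno
    push_neg at hno
    apply hx
    rw [Metric.mem_closedBall, dist_zero_right, EuclideanSpace.norm_eq]
    have h1 : ∑ i, ‖x i‖ ^ 2 ≤ ∑ _i : Fin d, (9:ℝ) := by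
      apply Finset.sum_le_sum
      intro i _
      have := hno i
      rw [Real.norm_eq_abs]
      nlinarith [abs_nonneg (x i)]
    have h2 : ∑ _i : Fin d, (9:ℝ) = 9 * d := by
      simp [Finset.sum_const, mul_comm]
    calc Real.sqrt (∑ i, ‖x i‖ ^ 2) ≤ Real.sqrt (9 * d) := Real.sqrt_le_sqrt (by linarith)
      _ = 3 * Real.sqrt d := by
          rw [show (9:ℝ) * d = 3 ^ 2 * d by norm_num, Real.sqrt_mul (by positivity),
            Real.sqrt_sq (by norm_num)]
  have hφint : Integrable φ volume := hφ.continuous.integrable_of_hasCompactSupport hcs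
  -- choose N with N * p > 1
  obtain ⟨N, hNp⟩ : ∃ N : ℕ, 1 < (N:ℝ) * p := by
    refine ⟨⌈1/p⌉₊ + 1, ?_⟩
    have h1 : (1:ℝ)/p ≤ ⌈1/p⌉₊ := Nat.le_ceil _
    have h2 : (1/p + 1) * p = 1 + p := by field_simp
    push_cast
    nlinarith
  obtain ⟨A, hA0, hA⟩ := Stmt3Aux.decay_bound d φ hφ hcs (d * N)
  set B : ℝ := A * (4 * π) ^ (d * N) with hB
  have hB0 : 0 < B := by positivity
  set c1 : ℂ := ((((2 * Real.pi) ^ d : ℝ)) : ℂ)⁻¹ with hc1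
  set c2 : ℂ := ((((2 * Real.pi) ^ ((d:ℝ)/2) : ℝ)) : ℂ)⁻¹ with hc2
  set cc : ℝ := ‖c1‖ * ‖c2‖ with hcc
  have hc1ne : c1 ≠ 0 := by
    rw [hc1]
    apply inv_ne_zero
    exact_mod_cast Complex.ofReal_ne_zero.2 (by positivity)
  have hc2ne : c2 ≠ 0 := by
    rw [hc2]
    apply inv_ne_zero
    exact_mod_cast Complex.ofReal_ne_zero.2
      (ne_of_gt (Real.rpow_pos_of_pos (by positivity) _))
  have hcc0 : 0 < cc := mul_pos (norm_pos_iff.2 hc1ne) (norm_pos_iff.2 hc2ne)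
  set gg : ℤ → ℝ≥0∞ := fun n => ENNReal.ofReal ((((1 + |(n:ℝ)|) ^ N)⁻¹) ^ p) with hgg
  have hgeq : ∀ n : ℤ, gg n = ENNReal.ofReal ((1 + |(n:ℝ)|) ^ (-((N:ℝ) * p))) := by
    intro n
    have h1 : (0:ℝ) < 1 + |(n:ℝ)| := by positivity
    simp only [hgg]
    congr 1
    rw [← Real.rpow_natCast (1 + |(n:ℝ)|) N, ← Real.rpow_neg h1.le, ← Real.rpow_mul h1.le,
      neg_mul]
  have hSne : (∑' n : ℤ, gg n) ≠ ⊤ := by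
    rw [tsum_congr hgeq]
    exact Stmt3Aux.tsum_int_rpow_ne_top hNp
  set Td : ℝ := ((∑' n : ℤ, gg n) ^ d).toReal with hTd
  have hTd0 : 0 ≤ Td := ENNReal.toReal_nonneg
  have hC0 : 0 < (cc * B) ^ p * (Td + 1) :=
    mul_pos (Real.rpow_pos_of_pos (mul_pos hcc0 hB0) p) (by linarith)
  refine ⟨(cc * B) ^ p * (Td + 1), hC0, ?_⟩
  intro h hh hhsupp
  set I : ℝ := ∫ x : EuclideanSpace ℝ (Fin d), ‖h x‖ with hI
  have hI0 : 0 ≤ I := by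
    rw [hI]; exact integral_nonneg fun x => norm_nonneg _
  set D : ℝ := cc * B * I with hD
  have hD0 : 0 ≤ D := by
    rw [hD]; positivity
  have hsupp01 : ∀ x : EuclideanSpace ℝ (Fin d), h x ≠ 0 → ∀ i, 0 ≤ x i ∧ x i ≤ 1 := by
    intro x hx i
    by_contra hcon
    exact hx (hhsupp x ⟨i, by rw [not_and_or] at hcon; push_neg at hcon; exact hcon⟩)
  -- the key per-k bound
  have hkey : ∀ k : Fin d → ℤ,
      ‖c1 * ∫ u in {u : EuclideanSpace ℝ (Fin d) | ∀ i, -Real.pi ≤ u i ∧ u i ≤ Real.pi},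
          (φ u * c2 * ∫ x : EuclideanSpace ℝ (Fin d),
              Complex.exp (Complex.I * ((∑ i, u i * x i : ℝ) : ℂ)) * h x) *
            Complex.exp (-(Complex.I * ((∑ i, (k i : ℝ) * u i : ℝ) : ℂ)))‖
        ≤ D * (∏ i, (1 + |(k i : ℝ)|) ^ N)⁻¹ := by
    intro k
    set P : ℝ := ∏ i, (1 + |(k i : ℝ)|) ^ N with hP
    have hP0 : 0 < P := by
      rw [hP]; exact Finset.prod_pos fun i _ => by positivity
    rw [Stmt3Aux.key_eq d φ h c2 hφ.continuous hφint hφsupp hh k, norm_mul]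
    have hbound : ∀ x : EuclideanSpace ℝ (Fin d),
        ‖(c2 * h x) * 𝓕 φ (((-(2 * π)⁻¹ : ℝ)) •
            (x - (WithLp.equiv 2 (Fin d → ℝ)).symm (fun i => (k i : ℝ))))‖
          ≤ ‖h x‖ * (‖c2‖ * (B * P⁻¹)) := by
      intro x
      rcases eq_or_ne (h x) 0 with hx0 | hx0
      · simp [hx0]
      · have hx01 := hsupp01 x hx0
        have hcb := Stmt3Aux.coord_bound d N φ A hA k x hx01
        rw [← hP, ← hB] at hcb
        have h𝓕 : ‖𝓕 φ (((-(2 * π)⁻¹ : ℝ)) •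
            (x - (WithLp.equiv 2 (Fin d → ℝ)).symm (fun i => (k i : ℝ))))‖ ≤ B * P⁻¹ := by
          have h2 := mul_le_mul_of_nonneg_right hcb (inv_nonneg.2 hP0.le)
          rwa [mul_assoc, mul_inv_cancel₀ hP0.ne', mul_one] at h2
        rw [norm_mul, norm_mul]
        calc ‖c2‖ * ‖h x‖ * ‖𝓕 φ (((-(2 * π)⁻¹ : ℝ)) •
              (x - (WithLp.equiv 2 (Fin d → ℝ)).symm (fun i => (k i : ℝ))))‖
            ≤ ‖c2‖ * ‖h x‖ * (B * P⁻¹) := mul_le_mul_of_nonneg_left h𝓕 (by positivity)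
          _ = ‖h x‖ * (‖c2‖ * (B * P⁻¹)) := by ring
    refine le_trans (mul_le_mul_of_nonneg_left (norm_integral_le_integral_norm _)
      (norm_nonneg c1)) ?_
    refine le_trans (mul_le_mul_of_nonneg_left (integral_mono_of_nonneg
      (Filter.Eventually.of_forall fun x => norm_nonneg _) (hh.norm.mul_const _)
      (Filter.Eventually.of_forall hbound)) (norm_nonneg c1)) ?_
    rw [integral_mul_const]
    apply le_of_eq
    rw [hD, hcc, hI]
    ring
  -- per-term bound in ℝ≥0∞
  have hterm : ∀ k : Fin d → ℤ,
      ENNReal.ofReal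
        (‖c1 * ∫ u in {u : EuclideanSpace ℝ (Fin d) | ∀ i, -Real.pi ≤ u i ∧ u i ≤ Real.pi},
            (φ u * c2 * ∫ x : EuclideanSpace ℝ (Fin d),
                Complex.exp (Complex.I * ((∑ i, u i * x i : ℝ) : ℂ)) * h x) *
              Complex.exp (-(Complex.I * ((∑ i, (k i : ℝ) * u i : ℝ) : ℂ)))‖ ^ p)
        ≤ ENNReal.ofReal (D ^ p) * ∏ i, gg (k i) := by
    intro k
    refine le_trans (ENNReal.ofReal_le_ofReal
      (Real.rpow_le_rpow (norm_nonneg _) (hkey k) hp0.le)) (le_of_eq ?_)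
    rw [Real.mul_rpow hD0 (by positivity), ← Finset.prod_inv_distrib,
      ← Real.finset_prod_rpow _ _ (fun i _ => by positivity) p,
      ENNReal.ofReal_mul (Real.rpow_nonneg hD0 p),
      ENNReal.ofReal_prod_of_nonneg (fun i _ => by positivity)]
  refine le_trans (ENNReal.tsum_le_tsum hterm) ?_
  rw [ENNReal.tsum_mul_left, Stmt3Aux.tsum_pi_prod d gg]
  rw [← ENNReal.ofReal_toReal (ENNReal.pow_ne_top hSne), ← hTd,
    ← ENNReal.ofReal_mul (Real.rpow_nonneg hD0 p)]
  apply ENNReal.ofReal_le_ofReal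
  have hDp : D ^ p = (cc * B) ^ p * I ^ p := by
    rw [hD, Real.mul_rpow (by positivity) hI0]
  rw [hDp]
  have hccBp : 0 ≤ (cc * B) ^ p := Real.rpow_nonneg (by positivity) p
  have hIp : 0 ≤ I ^ p := Real.rpow_nonneg hI0 p
  nlinarith [mul_nonneg hccBp hIp]
end

section
/- Let 0 < p < 2 and let f, g : (0,∞) → [0,∞) be antitone (nonincreasing) functions with ∫_0^∞ f(s)² ds = ∫_0^∞ g(s)² ds < ∞ and ∫_0^t f(s)² ds ≤ ∫_0^t g(s)² ds for every t > 0. If ∫_0^∞ f(s)^p ds < ∞, then ∫_0^∞ g(s)^p ds < ∞ and (∫_0^∞ g(s)^p ds)^{1/p} ≤ (∫_0^∞ f(s)^p ds)^{1/p}. -/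
/-!
Put `q = p / 2 ∈ (0, 1)`, `a = f²`, `b = g²`. For `v ≥ 0` one has
`v ^ q = q (1 - q) ∫₀^∞ min v r · r ^ (q - 2) dr`, so by Tonelli it suffices to compare
`∫ min b r ≤ ∫ min a r` at each level `r`. As `a` is nonincreasing, `a ≥ r` on `(0, t)` and
`a ≤ r` on `(t, ∞)` for some `t`. On `(0, t]` we have `min b r ≤ r = min a r`, and on `(t, ∞)`
majorization with equal total mass gives `∫_t^∞ b ≤ ∫_t^∞ a = ∫_t^∞ min a r`.
-/

open MeasureTheory Set ENNReal

lemma lintegral_Ioi_eq_lintegral_Ioc_add_lintegral_Ioi {a t : ℝ} (hat : a ≤ t) (f : ℝ → ℝ≥0∞) :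
    ∫⁻ x in Ioi a, f x = (∫⁻ x in Ioc a t, f x) + ∫⁻ x in Ioi t, f x := by
  rw [← Ioc_union_Ioi_eq_Ioi hat, lintegral_union measurableSet_Ioi (Ioc_disjoint_Ioi le_rfl)]

lemma lintegral_Ioc_zero_ofReal_rpow {s : ℝ} (hs : -1 < s) {v : ℝ} (hv : 0 ≤ v) :
    ∫⁻ r in Ioc 0 v, ENNReal.ofReal (r ^ s) = ENNReal.ofReal (v ^ (s + 1) / (s + 1)) := by
  have hint : IntegrableOn (fun r : ℝ => r ^ s) (Ioc 0 v) := by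
    simpa [uIoc_of_le hv] using (intervalIntegral.intervalIntegrable_rpow' hs (a := 0) (b := v)).1
  rw [← ofReal_integral_eq_lintegral_ofReal hint
    ((ae_restrict_mem measurableSet_Ioc).mono fun r hr => Real.rpow_nonneg hr.1.le _),
    ← intervalIntegral.integral_of_le hv, integral_rpow (Or.inl hs),
    Real.zero_rpow (by linarith), sub_zero]

lemma lintegral_Ioi_ofReal_rpow {s : ℝ} (hs : s < -1) {v : ℝ} (hv : 0 < v) :
    ∫⁻ r in Ioi v, ENNReal.ofReal (r ^ s) = ENNReal.ofReal (-v ^ (s + 1) / (s + 1)) := by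
  rw [← ofReal_integral_eq_lintegral_ofReal (integrableOn_Ioi_rpow_of_lt hs hv)
    ((ae_restrict_mem measurableSet_Ioi).mono fun r hr => Real.rpow_nonneg (hv.trans hr).le _),
    integral_Ioi_rpow_of_lt hs hv]

lemma lintegral_Ioi_zero_ofReal_rpow_eq_top (s : ℝ) :
    ∫⁻ r in Ioi 0, ENNReal.ofReal (r ^ s) = ∞ := by
  by_contra h
  refine not_integrableOn_Ioi_rpow s ((lintegral_ofReal_ne_top_iff_integrable ?_ ?_).1 h)
  · exact (measurable_id.pow_const s).aestronglyMeasurable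
  · exact (ae_restrict_mem measurableSet_Ioi).mono fun r hr => Real.rpow_nonneg hr.le s

section Kernel

variable {q : ℝ}

lemma rpow_eq_ofReal_mul_lintegral_min (hq0 : 0 < q) (hq1 : q < 1) (v : ℝ≥0∞) :
    v ^ q = ENNReal.ofReal (q * (1 - q)) *
      ∫⁻ r in Ioi 0, min v (ENNReal.ofReal r) * ENNReal.ofReal (r ^ (q - 2)) := by
  have hc : ENNReal.ofReal (q * (1 - q)) ≠ 0 := by
    rw [ne_eq, ENNReal.ofReal_eq_zero, not_le]; nlinarith
  rcases eq_top_or_lt_top v with rfl | hv_top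
  · rw [top_rpow_of_pos hq0, setLIntegral_congr_fun measurableSet_Ioi fun r (hr : 0 < r) => by
      rw [min_eq_right le_top, ← ENNReal.ofReal_mul hr.le,
        ← Real.rpow_one_add' hr.le (by linarith)],
      lintegral_Ioi_zero_ofReal_rpow_eq_top, mul_top hc]
  obtain ⟨v, hv0, rfl⟩ : ∃ w : ℝ, 0 ≤ w ∧ v = ENNReal.ofReal w :=
    ⟨v.toReal, toReal_nonneg, (ofReal_toReal hv_top.ne).symm⟩
  rcases hv0.eq_or_lt with rfl | hv
  · simp [zero_rpow_of_pos hq0]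
  have hlow : ∫⁻ r in Ioc 0 v, min (ENNReal.ofReal v) (ENNReal.ofReal r) *
      ENNReal.ofReal (r ^ (q - 2)) = ENNReal.ofReal (v ^ q / q) := by
    rw [setLIntegral_congr_fun measurableSet_Ioc fun r (hr : r ∈ Ioc 0 v) => by
      rw [min_eq_right (ofReal_le_ofReal hr.2), ← ENNReal.ofReal_mul hr.1.le,
        ← Real.rpow_one_add' hr.1.le (by linarith)],
      lintegral_Ioc_zero_ofReal_rpow (by linarith) hv.le]
    ring_nf
  have hhigh : ∫⁻ r in Ioi v, min (ENNReal.ofReal v) (ENNReal.ofReal r) *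
      ENNReal.ofReal (r ^ (q - 2)) = ENNReal.ofReal (v ^ q / (1 - q)) := by
    rw [setLIntegral_congr_fun measurableSet_Ioi fun r (hr : v < r) => by
      rw [min_eq_left (ofReal_le_ofReal hr.le)],
      lintegral_const_mul _ (by fun_prop),
      lintegral_Ioi_ofReal_rpow (by linarith) hv, ← ENNReal.ofReal_mul hv.le]
    congr 1
    rw [mul_div_assoc', mul_neg, ← Real.rpow_one_add' hv.le (by linarith),
      show 1 + (q - 2 + 1) = q by ring, show q - 2 + 1 = -(1 - q) by ring, neg_div_neg_eq]
  rw [lintegral_Ioi_eq_lintegral_Ioc_add_lintegral_Ioi hv.le, hlow, hhigh,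
    ← ENNReal.ofReal_add (by positivity) (div_nonneg (by positivity) (by linarith)),
    ← ENNReal.ofReal_mul (by nlinarith), ofReal_rpow_of_nonneg hv.le hq0.le]
  congr 1
  have : 1 - q ≠ 0 := by linarith
  field_simp
  ring

lemma lintegral_rpow_eq_ofReal_mul_lintegral_lintegral_min {α : Type*} [MeasurableSpace α]
    {μ : Measure α} [SFinite μ] (hq0 : 0 < q) (hq1 : q < 1) {F : α → ℝ≥0∞}
    (hF : AEMeasurable F μ) :
    ∫⁻ x, F x ^ q ∂μ = ENNReal.ofReal (q * (1 - q)) *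
      ∫⁻ r in Ioi 0, (∫⁻ x, min (F x) (ENNReal.ofReal r) ∂μ) * ENNReal.ofReal (r ^ (q - 2)) := by
  have hk : AEMeasurable (Function.uncurry fun (x : α) (r : ℝ) =>
      min (F x) (ENNReal.ofReal r) * ENNReal.ofReal (r ^ (q - 2)))
      (μ.prod (volume.restrict (Ioi (0 : ℝ)))) :=
    ((hF.comp_quasiMeasurePreserving Measure.quasiMeasurePreserving_fst).min
      (measurable_snd.ennreal_ofReal.aemeasurable)).mul
      ((measurable_snd.pow_const _).ennreal_ofReal.aemeasurable)
  simp_rw [rpow_eq_ofReal_mul_lintegral_min hq0 hq1 (F _)]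
  rw [lintegral_const_mul'' _ hk.lintegral_prod_right, lintegral_lintegral_swap hk]
  congr 1
  refine lintegral_congr fun r => ?_
  rw [lintegral_mul_const'' _ (hF.min aemeasurable_const)]

end Kernel

section Majorization

variable {a b : ℝ → ℝ≥0∞}

lemma lintegral_Ioi_le_of_majorizes
    (hab : ∫⁻ x in Ioi 0, a x = ∫⁻ x in Ioi 0, b x) (hfin : ∫⁻ x in Ioi 0, a x ≠ ∞)
    (hmaj : ∀ t > 0, ∫⁻ x in Ioc 0 t, a x ≤ ∫⁻ x in Ioc 0 t, b x) {t : ℝ} (ht : 0 ≤ t) :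
    ∫⁻ x in Ioi t, b x ≤ ∫⁻ x in Ioi t, a x := by
  rcases ht.eq_or_lt with rfl | ht
  · exact hab.ge
  have hb_ne_top : ∫⁻ x in Ioc 0 t, b x ≠ ∞ :=
    ne_top_of_le_ne_top (hab ▸ hfin) (lintegral_mono_set Ioc_subset_Ioi_self)
  refine ENNReal.le_of_add_le_add_left hb_ne_top ?_
  calc (∫⁻ x in Ioc 0 t, b x) + ∫⁻ x in Ioi t, b x
      = (∫⁻ x in Ioc 0 t, a x) + ∫⁻ x in Ioi t, a x := by
        rw [← lintegral_Ioi_eq_lintegral_Ioc_add_lintegral_Ioi ht.le,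
          ← lintegral_Ioi_eq_lintegral_Ioc_add_lintegral_Ioi ht.le, hab]
    _ ≤ (∫⁻ x in Ioc 0 t, b x) + ∫⁻ x in Ioi t, a x := add_le_add (hmaj t ht) le_rfl

lemma AntitoneOn.exists_cutoff_of_lintegral_ne_top (ha : AntitoneOn a (Ioi 0))
    (hfin : ∫⁻ x in Ioi 0, a x ≠ ∞) {r : ℝ≥0∞} (hr : r ≠ 0) :
    ∃ t, 0 ≤ t ∧ (∀ x ∈ Ioo 0 t, r ≤ a x) ∧ ∀ x, t < x → a x ≤ r := by
  set S := {x | 0 < x ∧ r < a x}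
  have hbdd : BddAbove S := by
    refine ⟨((∫⁻ x in Ioi 0, a x) / r).toReal, fun x hx => ?_⟩
    rw [← ofReal_le_iff_le_toReal (div_ne_top hfin hr),
      ENNReal.le_div_iff_mul_le (.inl hr) (.inr hfin)]
    calc ENNReal.ofReal x * r = ∫⁻ _ in Ioc 0 x, r := by
          rw [setLIntegral_const, Real.volume_Ioc, sub_zero, mul_comm]
      _ ≤ ∫⁻ y in Ioc 0 x, a y :=
          setLIntegral_mono' measurableSet_Ioc fun y hy => hx.2.le.trans (ha hy.1 hx.1 hy.2)
      _ ≤ ∫⁻ y in Ioi 0, a y := lintegral_mono_set Ioc_subset_Ioi_self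
  refine ⟨sSup S, Real.sSup_nonneg fun x hx => hx.1.le, fun y hy => ?_, fun x hx => ?_⟩
  · have hS : S.Nonempty := by
      by_contra hS
      rw [not_nonempty_iff_eq_empty.1 hS, Real.sSup_empty] at hy
      exact (hy.1.trans hy.2).false
    obtain ⟨x, hxS, hyx⟩ := exists_lt_of_lt_csSup hS hy.2
    exact hxS.2.le.trans (ha hy.1 hxS.1 hyx.le)
  · by_contra! hax
    exact (le_csSup hbdd ⟨(Real.sSup_nonneg fun x hx => hx.1.le).trans_lt hx, hax⟩).not_gt hx

lemma lintegral_min_le_of_majorizes (ha : AntitoneOn a (Ioi 0))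
    (hab : ∫⁻ x in Ioi 0, a x = ∫⁻ x in Ioi 0, b x) (hfin : ∫⁻ x in Ioi 0, a x ≠ ∞)
    (hmaj : ∀ t > 0, ∫⁻ x in Ioc 0 t, a x ≤ ∫⁻ x in Ioc 0 t, b x) (r : ℝ≥0∞) :
    ∫⁻ x in Ioi 0, min (b x) r ≤ ∫⁻ x in Ioi 0, min (a x) r := by
  rcases eq_or_ne r 0 with rfl | hr
  · simp
  obtain ⟨t, ht, hlow, hhigh⟩ := ha.exists_cutoff_of_lintegral_ne_top hfin hr
  rw [lintegral_Ioi_eq_lintegral_Ioc_add_lintegral_Ioi ht,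
    lintegral_Ioi_eq_lintegral_Ioc_add_lintegral_Ioi ht]
  gcongr ?_ + ?_
  · calc ∫⁻ x in Ioc 0 t, min (b x) r
        ≤ ∫⁻ _ in Ioo 0 t, r := by
          rw [setLIntegral_congr Ioo_ae_eq_Ioc.symm]
          exact lintegral_mono fun x => min_le_right _ _
      _ = ∫⁻ x in Ioo 0 t, min (a x) r :=
          setLIntegral_congr_fun measurableSet_Ioo fun x hx => (min_eq_right (hlow x hx)).symm
      _ ≤ ∫⁻ x in Ioc 0 t, min (a x) r := lintegral_mono_set Ioo_subset_Ioc_self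
  · calc ∫⁻ x in Ioi t, min (b x) r
        ≤ ∫⁻ x in Ioi t, b x := lintegral_mono fun x => min_le_left _ _
      _ ≤ ∫⁻ x in Ioi t, a x := lintegral_Ioi_le_of_majorizes hab hfin hmaj ht
      _ = ∫⁻ x in Ioi t, min (a x) r :=
          setLIntegral_congr_fun measurableSet_Ioi fun x hx => (min_eq_left (hhigh x hx)).symm

theorem lintegral_rpow_le_of_majorizes {q : ℝ} (hq0 : 0 < q) (hq1 : q < 1)
    (ha : AntitoneOn a (Ioi 0)) (hb : AEMeasurable b (volume.restrict (Ioi 0)))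
    (hab : ∫⁻ x in Ioi 0, a x = ∫⁻ x in Ioi 0, b x) (hfin : ∫⁻ x in Ioi 0, a x ≠ ∞)
    (hmaj : ∀ t > 0, ∫⁻ x in Ioc 0 t, a x ≤ ∫⁻ x in Ioc 0 t, b x) :
    ∫⁻ x in Ioi 0, b x ^ q ≤ ∫⁻ x in Ioi 0, a x ^ q := by
  rw [lintegral_rpow_eq_ofReal_mul_lintegral_lintegral_min hq0 hq1 hb,
    lintegral_rpow_eq_ofReal_mul_lintegral_lintegral_min hq0 hq1
      (aemeasurable_restrict_of_antitoneOn measurableSet_Ioi ha)]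
  exact mul_le_mul_right (lintegral_mono fun r =>
    mul_le_mul_left (lintegral_min_le_of_majorizes ha hab hfin hmaj _) _) _

end Majorization

lemma AntitoneOn.ofReal_sq {f : ℝ → ℝ} {s : Set ℝ} (hf : AntitoneOn f s)
    (hf0 : ∀ x ∈ s, 0 ≤ f x) : AntitoneOn (fun x => ENNReal.ofReal (f x ^ 2)) s :=
  fun _ hx _ hy hxy => ofReal_le_ofReal (pow_le_pow_left₀ (hf0 _ hy) (hf hx hy hxy) 2)

lemma ofReal_rpow_eq_ofReal_sq_rpow {x : ℝ} (hx : 0 ≤ x) {p : ℝ} (hp : 0 ≤ p) :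
    ENNReal.ofReal (x ^ p) = ENNReal.ofReal (x ^ 2) ^ (p / 2) := by
  rw [ofReal_rpow_of_nonneg (sq_nonneg x) (by positivity), ← Real.rpow_natCast,
    ← Real.rpow_mul hx, Nat.cast_ofNat, mul_div_cancel₀ p two_ne_zero]

/-- Let `0 < p < 2` and `f, g : (0,∞) → [0,∞)` be nonincreasing with
`∫₀^∞ f² = ∫₀^∞ g² < ∞` and `∫₀^t f² ≤ ∫₀^t g²` for all `t > 0`. If `∫₀^∞ f^p < ∞`,
then `∫₀^∞ g^p < ∞` and `(∫₀^∞ g^p)^{1/p} ≤ (∫₀^∞ f^p)^{1/p}`. -/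
theorem stmt4 (p : ℝ) (hp0 : 0 < p) (hp2 : p < 2)
    (f g : ℝ → ℝ)
    (hf : AntitoneOn f (Set.Ioi 0)) (hg : AntitoneOn g (Set.Ioi 0))
    (hf0 : ∀ s ∈ Set.Ioi (0 : ℝ), 0 ≤ f s) (hg0 : ∀ s ∈ Set.Ioi (0 : ℝ), 0 ≤ g s)
    (heq : (∫⁻ s in Set.Ioi (0 : ℝ), ENNReal.ofReal (f s ^ 2)) =
           (∫⁻ s in Set.Ioi (0 : ℝ), ENNReal.ofReal (g s ^ 2)))
    (hfin : (∫⁻ s in Set.Ioi (0 : ℝ), ENNReal.ofReal (f s ^ 2)) < ∞)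
    (hmaj : ∀ t > (0 : ℝ), (∫⁻ s in Set.Ioc (0 : ℝ) t, ENNReal.ofReal (f s ^ 2)) ≤
                           (∫⁻ s in Set.Ioc (0 : ℝ) t, ENNReal.ofReal (g s ^ 2)))
    (hfp : (∫⁻ s in Set.Ioi (0 : ℝ), ENNReal.ofReal (f s ^ p)) < ∞) :
    (∫⁻ s in Set.Ioi (0 : ℝ), ENNReal.ofReal (g s ^ p)) < ∞ ∧
    (∫⁻ s in Set.Ioi (0 : ℝ), ENNReal.ofReal (g s ^ p)).toReal ^ (1 / p) ≤
      (∫⁻ s in Set.Ioi (0 : ℝ), ENNReal.ofReal (f s ^ p)).toReal ^ (1 / p) := by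
  have hle : ∫⁻ s in Ioi 0, ENNReal.ofReal (g s ^ p) ≤
      ∫⁻ s in Ioi 0, ENNReal.ofReal (f s ^ p) := by
    rw [setLIntegral_congr_fun measurableSet_Ioi fun s hs =>
        ofReal_rpow_eq_ofReal_sq_rpow (hg0 s hs) hp0.le,
      setLIntegral_congr_fun measurableSet_Ioi fun s hs =>
        ofReal_rpow_eq_ofReal_sq_rpow (hf0 s hs) hp0.le]
    exact lintegral_rpow_le_of_majorizes (by positivity) (by linarith) (hf.ofReal_sq hf0)
      (aemeasurable_restrict_of_antitoneOn measurableSet_Ioi (hg.ofReal_sq hg0)) heq hfin.ne hmaj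
  exact ⟨hle.trans_lt hfp,
    Real.rpow_le_rpow toReal_nonneg (toReal_mono hfp.ne hle) (by positivity)⟩
end

section
/- Let 0 < p < 2. There exists a constant c_p > 0 depending only on p with the following property: whenever f, g : (0,∞) → [0,∞) are antitone (nonincreasing) functions with ∫_0^∞ f(s)² ds = ∫_0^∞ g(s)² ds < ∞ and ∫_0^t f(s)² ds ≤ ∫_0^t g(s)² ds for every t > 0, and sup_{t>0} t^{1/p}·f(t) < ∞, then sup_{t>0} t^{1/p}·g(t) ≤ c_p · sup_{t>0} t^{1/p}·f(t). -/
/-!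
Write `A` for the weak-`L^p` quasi-norm of `f`. The pointwise bound `f s ≤ A s^{-1/p}` makes the
tail `∫_t^∞ f²` at most `A² t^{1-2/p} / (2/p - 1)`, which is finite exactly because `p < 2`.
Since `f²` and `g²` have the same finite total integral, the majorization `∫_0^t f² ≤ ∫_0^t g²`
reverses on tails: `∫_t^∞ g² ≤ ∫_t^∞ f²`. As `g` is antitone, `t g(2t)² ≤ ∫_t^{2t} g²`, and
comparing powers of `t` gives `(2t)^{1/p} g(2t) ≤ 2^{1/p} (2/p - 1)^{-1/2} A`.
-/

open MeasureTheory ENNReal Set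

theorem setLIntegral_Ioi_ofReal_le_of_rpow_mul_le {h : ℝ → ℝ} {C q t : ℝ} (hq : 1 < q)
    (ht : 0 < t) (hC : 0 ≤ C) (hh : ∀ s ∈ Ioi t, s ^ q * h s ≤ C) :
    ∫⁻ s in Ioi t, ENNReal.ofReal (h s) ≤ ENNReal.ofReal (C / (q - 1) * t ^ (1 - q)) := by
  have hq' : -q < -1 := by linarith
  have h_le : ∀ s ∈ Ioi t, h s ≤ C * s ^ (-q) := fun s hs => by
    have hs0 : 0 < s := ht.trans hs
    rw [Real.rpow_neg hs0.le, ← div_eq_mul_inv, le_div_iff₀ (Real.rpow_pos_of_pos hs0 q), mul_comm]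
    exact hh s hs
  have h_int : ∫ s in Ioi t, C * s ^ (-q) = C / (q - 1) * t ^ (1 - q) := by
    rw [integral_const_mul, integral_Ioi_rpow_of_lt hq' ht,
      show -q + 1 = 1 - q by ring, neg_div, ← div_neg, neg_sub]
    ring
  calc ∫⁻ s in Ioi t, ENNReal.ofReal (h s)
      ≤ ∫⁻ s in Ioi t, ENNReal.ofReal (C * s ^ (-q)) :=
        setLIntegral_mono' measurableSet_Ioi fun s hs => ENNReal.ofReal_le_ofReal (h_le s hs)
    _ = ENNReal.ofReal (C / (q - 1) * t ^ (1 - q)) := by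
        rw [← h_int, ofReal_integral_eq_lintegral_ofReal
          ((integrableOn_Ioi_rpow_of_lt hq' ht).const_mul C)]
        exact (ae_restrict_iff' measurableSet_Ioi).2 (ae_of_all _ fun s hs =>
          mul_nonneg hC (Real.rpow_nonneg (ht.trans hs).le _))

theorem setLIntegral_Ioi_le_of_setLIntegral_Ioc_le {μ : Measure ℝ} {F G : ℝ → ℝ≥0∞} {a t : ℝ}
    (hat : a ≤ t) (htot : ∫⁻ s in Ioi a, F s ∂μ = ∫⁻ s in Ioi a, G s ∂μ)
    (hG : ∫⁻ s in Ioi a, G s ∂μ ≠ ∞) (hle : ∫⁻ s in Ioc a t, F s ∂μ ≤ ∫⁻ s in Ioc a t, G s ∂μ) :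
    ∫⁻ s in Ioi t, G s ∂μ ≤ ∫⁻ s in Ioi t, F s ∂μ := by
  have h_split (H : ℝ → ℝ≥0∞) :
      ∫⁻ s in Ioi a, H s ∂μ = ∫⁻ s in Ioc a t, H s ∂μ + ∫⁻ s in Ioi t, H s ∂μ := by
    rw [← lintegral_union measurableSet_Ioi Ioc_disjoint_Ioi_same, Ioc_union_Ioi_eq_Ioi hat]
  have hG_Ioc : ∫⁻ s in Ioc a t, G s ∂μ ≠ ∞ :=
    ne_top_of_le_ne_top hG (lintegral_mono_set Ioc_subset_Ioi_self)
  refine (ENNReal.add_le_add_iff_left hG_Ioc).1 ?_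
  rw [← h_split, ← htot, h_split]
  gcongr

theorem AntitoneOn.mul_sub_le_setLIntegral_Ioc {F : ℝ → ℝ≥0∞} {a b : ℝ}
    (hF : AntitoneOn F (Ioc a b)) : F b * ENNReal.ofReal (b - a) ≤ ∫⁻ s in Ioc a b, F s := by
  rw [← Real.volume_Ioc, ← setLIntegral_const]
  exact setLIntegral_mono' measurableSet_Ioc fun s hs =>
    hF hs (right_mem_Ioc.2 (hs.1.trans_le hs.2)) hs.2

theorem AntitoneOn.ofReal_sq_s5 {g : ℝ → ℝ} {S : Set ℝ} (hg : AntitoneOn g S)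
    (hg0 : ∀ s ∈ S, 0 ≤ g s) : AntitoneOn (fun s => ENNReal.ofReal (g s ^ 2)) S :=
  fun _ hx _ hy hxy => ENNReal.ofReal_le_ofReal (pow_le_pow_left₀ (hg0 _ hy) (hg hx hy hxy) 2)

theorem rpow_mul_sq {s : ℝ} (hs : 0 ≤ s) (a y : ℝ) : (s ^ a * y) ^ 2 = s ^ (2 * a) * y ^ 2 := by
  rw [mul_pow, ← Real.rpow_mul_natCast hs, Nat.cast_ofNat, mul_comm a]

theorem rpow_two_mul_mul_sq_le_of_ofReal_rpow_mul_le {s y a : ℝ} {A : ℝ≥0∞} (hA : A ≠ ∞)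
    (hs : 0 ≤ s) (hy : 0 ≤ y) (h : ENNReal.ofReal (s ^ a * y) ≤ A) :
    s ^ (2 * a) * y ^ 2 ≤ A.toReal ^ 2 := by
  rw [← rpow_mul_sq hs]
  exact pow_le_pow_left₀ (mul_nonneg (Real.rpow_nonneg hs _) hy)
    ((ENNReal.ofReal_le_iff_le_toReal hA).1 h) 2

theorem rpow_mul_le_sqrt_of_mul_sq_le {t y K a : ℝ} (ht : 0 < t)
    (h : t * y ^ 2 ≤ K * t ^ (1 - 2 * a)) : t ^ a * y ≤ √K := by
  have h_sq : (t ^ a * y) ^ 2 ≤ K := by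
    rw [Real.rpow_sub ht, Real.rpow_one, mul_div_assoc', le_div_iff₀ (Real.rpow_pos_of_pos ht _),
      mul_comm K, mul_assoc, mul_le_mul_iff_right₀ ht] at h
    rwa [rpow_mul_sq ht.le, mul_comm]
  exact (le_abs_self _).trans (Real.abs_le_sqrt h_sq)

/-- Let `0 < p < 2`. There is a constant `c_p > 0` such that whenever
`f, g : (0,∞) → [0,∞)` are nonincreasing with `∫₀^∞ f² = ∫₀^∞ g² < ∞` and
`∫₀^t f² ≤ ∫₀^t g²` for all `t > 0`, and `sup_{t>0} t^{1/p} f(t) < ∞`, then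
`sup_{t>0} t^{1/p} g(t) ≤ c_p · sup_{t>0} t^{1/p} f(t)`. -/
theorem stmt5 (p : ℝ) (hp0 : 0 < p) (hp2 : p < 2) :
    ∃ c : ℝ, 0 < c ∧
      ∀ f g : ℝ → ℝ,
        AntitoneOn f (Set.Ioi 0) → AntitoneOn g (Set.Ioi 0) →
        (∀ s ∈ Set.Ioi (0 : ℝ), 0 ≤ f s) → (∀ s ∈ Set.Ioi (0 : ℝ), 0 ≤ g s) →
        (∫⁻ s in Set.Ioi (0 : ℝ), ENNReal.ofReal (f s ^ 2)) =
          (∫⁻ s in Set.Ioi (0 : ℝ), ENNReal.ofReal (g s ^ 2)) →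
        (∫⁻ s in Set.Ioi (0 : ℝ), ENNReal.ofReal (f s ^ 2)) < ∞ →
        (∀ t > (0 : ℝ), (∫⁻ s in Set.Ioc (0 : ℝ) t, ENNReal.ofReal (f s ^ 2)) ≤
                        (∫⁻ s in Set.Ioc (0 : ℝ) t, ENNReal.ofReal (g s ^ 2))) →
        (⨆ t ∈ Set.Ioi (0 : ℝ), ENNReal.ofReal (t ^ (1 / p) * f t)) < ∞ →
        (⨆ t ∈ Set.Ioi (0 : ℝ), ENNReal.ofReal (t ^ (1 / p) * g t)) ≤
          ENNReal.ofReal c * ⨆ t ∈ Set.Ioi (0 : ℝ), ENNReal.ofReal (t ^ (1 / p) * f t) := by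
  have hq : 1 < 2 * (1 / p) := by rwa [mul_one_div, one_lt_div hp0]
  refine ⟨2 ^ (1 / p) / √(2 * (1 / p) - 1),
    div_pos (by positivity) (Real.sqrt_pos.2 (by linarith)), ?_⟩
  intro f g _ hg hf0 hg0 htot hfin hmaj hA
  set A := ⨆ t ∈ Ioi (0 : ℝ), ENNReal.ofReal (t ^ (1 / p) * f t)
  have hfA (s : ℝ) (hs : s ∈ Ioi 0) : s ^ (2 * (1 / p)) * f s ^ 2 ≤ A.toReal ^ 2 :=
    rpow_two_mul_mul_sq_le_of_ofReal_rpow_mul_le hA.ne (le_of_lt hs) (hf0 s hs)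
      (le_iSup₂ (f := fun t (_ : t ∈ Ioi (0 : ℝ)) => ENNReal.ofReal (t ^ (1 / p) * f t)) s hs)
  refine iSup₂_le fun u (hu : 0 < u) => ?_
  obtain ⟨t, ht, rfl⟩ : ∃ t, 0 < t ∧ 2 * t = u := ⟨u / 2, by positivity, by ring⟩
  have h_tail : ENNReal.ofReal (g (2 * t) ^ 2) * ENNReal.ofReal (2 * t - t)
      ≤ ENNReal.ofReal (A.toReal ^ 2 / (2 * (1 / p) - 1) * t ^ (1 - 2 * (1 / p))) :=
    calc _ ≤ ∫⁻ s in Ioc t (2 * t), ENNReal.ofReal (g s ^ 2) :=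
          ((hg.ofReal_sq_s5 hg0).mono fun s hs => ht.trans hs.1).mul_sub_le_setLIntegral_Ioc
      _ ≤ ∫⁻ s in Ioi t, ENNReal.ofReal (g s ^ 2) := lintegral_mono_set Ioc_subset_Ioi_self
      _ ≤ ∫⁻ s in Ioi t, ENNReal.ofReal (f s ^ 2) :=
          setLIntegral_Ioi_le_of_setLIntegral_Ioc_le ht.le htot (htot ▸ hfin.ne) (hmaj t ht)
      _ ≤ _ := setLIntegral_Ioi_ofReal_le_of_rpow_mul_le hq ht (sq_nonneg _)
          fun s hs => hfA s (ht.trans hs)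
  rw [← ENNReal.ofReal_mul (sq_nonneg _), ENNReal.ofReal_le_ofReal_iff (by positivity),
    show 2 * t - t = t by ring, mul_comm] at h_tail
  have h_bound := rpow_mul_le_sqrt_of_mul_sq_le ht h_tail
  rw [Real.sqrt_div' _ (by linarith), Real.sqrt_sq ENNReal.toReal_nonneg] at h_bound
  calc ENNReal.ofReal ((2 * t) ^ (1 / p) * g (2 * t))
      = ENNReal.ofReal (2 ^ (1 / p) * (t ^ (1 / p) * g (2 * t))) := by
        rw [Real.mul_rpow zero_le_two ht.le, mul_assoc]
    _ ≤ ENNReal.ofReal (2 ^ (1 / p) / √(2 * (1 / p) - 1) * A.toReal) := by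
        refine ENNReal.ofReal_le_ofReal ?_
        rw [mul_comm_div]
        exact mul_le_mul_of_nonneg_left h_bound (by positivity)
    _ = _ := by rw [ENNReal.ofReal_mul (by positivity), ENNReal.ofReal_toReal hA.ne]
end

section
/- Let 0 < p < ∞, let (X, μ) and (Y, ν) be σ-finite measure spaces, let f : X → ℂ be in L^p(μ) and let g : Y → ℂ be measurable with ‖g‖_{p,∞} < ∞. Then the function h : X × Y → ℂ defined by h(x,y) = f(x)·g(y) satisfies ‖h‖_{p,∞} ≤ ‖f‖_{L^p(μ)} · ‖g‖_{p,∞}, where the weak quasi-norm of h is taken with respect to the product measure μ × ν. -/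
open MeasureTheory ENNReal

/-- The weak-`L^p` quasi-norm `‖h‖_{p,∞} = sup_{t>0} t · (μ {x : |h x| > t})^{1/p}`. -/
noncomputable def weakLp {X : Type*} [MeasurableSpace X] (μ : Measure X) (p : ℝ)
    (h : X → ℂ) : ℝ≥0∞ :=
  ⨆ t ∈ Set.Ioi (0 : ℝ), ENNReal.ofReal t * μ {x | t < ‖h x‖} ^ (1 / p)

/-! By Chebyshev, for `x` with `f x ≠ 0` the slice `{y | t < ‖f x * g y‖} = {y | t / ‖f x‖ < ‖g y‖}`
has `ν`-measure at most `‖f x‖ ^ p * ‖g‖_{p,∞} ^ p / t ^ p`. Integrating this over `x` (Tonelli)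
gives `t ^ p * (μ × ν) {t < ‖h‖} ≤ ‖f‖_p ^ p * ‖g‖_{p,∞} ^ p`, and taking `p`-th roots and the
supremum over `t` gives the bound. -/

theorem mul_rpow_one_div_eq {p : ℝ} (hp : 0 < p) (t m : ℝ≥0∞) :
    t * m ^ (1 / p) = (t ^ p * m) ^ (1 / p) := by
  rw [ENNReal.mul_rpow_of_nonneg _ _ (by positivity), ← ENNReal.rpow_mul,
    mul_one_div_cancel hp.ne', ENNReal.rpow_one]

section WeakLp

variable {X : Type*} [MeasurableSpace X] {μ : Measure X} {p : ℝ}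

theorem weakLp_le_of_forall_rpow_mul_le (hp : 0 < p) {h : X → ℂ} {C : ℝ≥0∞}
    (hC : ∀ t : ℝ, 0 < t → ENNReal.ofReal t ^ p * μ {x | t < ‖h x‖} ≤ C ^ p) :
    weakLp μ p h ≤ C := by
  refine iSup₂_le fun t ht => ?_
  calc ENNReal.ofReal t * μ {x | t < ‖h x‖} ^ (1 / p)
      = (ENNReal.ofReal t ^ p * μ {x | t < ‖h x‖}) ^ (1 / p) := mul_rpow_one_div_eq hp _ _
    _ ≤ (C ^ p) ^ (1 / p) := ENNReal.rpow_le_rpow (hC t ht) (by positivity)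
    _ = C := by rw [← ENNReal.rpow_mul, mul_one_div_cancel hp.ne', ENNReal.rpow_one]

theorem rpow_mul_measure_le_weakLp_rpow (hp : 0 < p) (h : X → ℂ) {t : ℝ} (ht : 0 < t) :
    ENNReal.ofReal t ^ p * μ {x | t < ‖h x‖} ≤ weakLp μ p h ^ p := by
  have hle : ENNReal.ofReal t * μ {x | t < ‖h x‖} ^ (1 / p) ≤ weakLp μ p h :=
    le_iSup₂_of_le (f := fun t _ => ENNReal.ofReal t * μ {x | t < ‖h x‖} ^ (1 / p)) t ht le_rfl
  rw [mul_rpow_one_div_eq hp] at hle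
  have hle_p := ENNReal.rpow_le_rpow hle hp.le
  rwa [← ENNReal.rpow_mul, one_div_mul_cancel hp.ne', ENNReal.rpow_one] at hle_p

theorem rpow_mul_measure_const_mul_le (hp : 0 < p) (c : ℂ) (h : X → ℂ) {t : ℝ} (ht : 0 < t) :
    ENNReal.ofReal t ^ p * μ {x | t < ‖c * h x‖} ≤
      ENNReal.ofReal (‖c‖ ^ p) * weakLp μ p h ^ p := by
  rcases eq_or_ne c 0 with rfl | hc
  · simp [lt_asymm ht]
  have hc' : 0 < ‖c‖ := norm_pos_iff.mpr hc
  have hset : {x | t < ‖c * h x‖} = {x | t / ‖c‖ < ‖h x‖} := by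
    ext x
    change t < ‖c * h x‖ ↔ t / ‖c‖ < ‖h x‖
    rw [norm_mul, div_lt_iff₀ hc', mul_comm]
  have ht_eq : ENNReal.ofReal t ^ p = ENNReal.ofReal (‖c‖ ^ p) * ENNReal.ofReal (t / ‖c‖) ^ p := by
    rw [← ENNReal.ofReal_rpow_of_nonneg (norm_nonneg c) hp.le,
      ← ENNReal.mul_rpow_of_nonneg _ _ hp.le, ← ENNReal.ofReal_mul (norm_nonneg c),
      mul_div_cancel₀ t hc'.ne']
  rw [hset, ht_eq, mul_assoc]
  gcongr
  exact rpow_mul_measure_le_weakLp_rpow hp h (div_pos ht hc')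

end WeakLp

theorem stmt6_general {X Y : Type*} [MeasurableSpace X] [MeasurableSpace Y]
    (μ : Measure X) (ν : Measure Y) [SigmaFinite ν]
    (p : ℝ) (hp : 0 < p) (f : X → ℂ) (g : Y → ℂ)
    (hf : Measurable f) (hg : Measurable g) :
    weakLp (μ.prod ν) p (fun z => f z.1 * g z.2) ≤
      (∫⁻ x, ENNReal.ofReal (‖f x‖ ^ p) ∂μ) ^ (1 / p) * weakLp ν p g := by
  refine weakLp_le_of_forall_rpow_mul_le hp fun t ht => ?_
  have hlevel : MeasurableSet {z : X × Y | t < ‖f z.1 * g z.2‖} :=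
    measurableSet_lt measurable_const ((hf.comp measurable_fst).mul (hg.comp measurable_snd)).norm
  have hf_pow : Measurable fun x => ENNReal.ofReal (‖f x‖ ^ p) := by fun_prop
  calc ENNReal.ofReal t ^ p * μ.prod ν {z | t < ‖f z.1 * g z.2‖}
      = ∫⁻ x, ENNReal.ofReal t ^ p * ν {y | t < ‖f x * g y‖} ∂μ := by
        rw [Measure.prod_apply hlevel,
          lintegral_const_mul' _ _ (rpow_ne_top_of_nonneg hp.le ofReal_ne_top)]
        rfl
    _ ≤ ∫⁻ x, weakLp ν p g ^ p * ENNReal.ofReal (‖f x‖ ^ p) ∂μ :=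
        lintegral_mono fun x =>
          (rpow_mul_measure_const_mul_le hp (f x) g ht).trans_eq (mul_comm _ _)
    _ = ((∫⁻ x, ENNReal.ofReal (‖f x‖ ^ p) ∂μ) ^ (1 / p) * weakLp ν p g) ^ p := by
        rw [lintegral_const_mul _ hf_pow, ENNReal.mul_rpow_of_nonneg _ _ hp.le, ← ENNReal.rpow_mul,
          one_div_mul_cancel hp.ne', ENNReal.rpow_one, mul_comm]

/-- Let `0 < p < ∞`, `(X, μ)` and `(Y, ν)` σ-finite, `f ∈ L^p(μ)` and `g`
measurable with `‖g‖_{p,∞} < ∞`. Then `h(x,y) = f(x)·g(y)` satisfies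
`‖h‖_{p,∞} ≤ ‖f‖_{L^p(μ)} · ‖g‖_{p,∞}` with respect to the product measure `μ × ν`. -/
theorem stmt6 {X Y : Type*} [MeasurableSpace X] [MeasurableSpace Y]
    (μ : Measure X) (ν : Measure Y) [SigmaFinite μ] [SigmaFinite ν]
    (p : ℝ) (hp : 0 < p) (f : X → ℂ) (g : Y → ℂ)
    (hf : Measurable f) (hg : Measurable g)
    (hfp : (∫⁻ x, ENNReal.ofReal (‖f x‖ ^ p) ∂μ) < ∞)
    (hgw : weakLp ν p g < ∞) :
    weakLp (μ.prod ν) p (fun z => f z.1 * g z.2) ≤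
      (∫⁻ x, ENNReal.ofReal (‖f x‖ ^ p) ∂μ) ^ (1 / p) * weakLp ν p g :=
  stmt6_general μ ν p hp f g hf hg
end

section
/- Define f : ℝ → ℝ by f(t) = t^{−1/2}·|log t|^{−1} for t ∈ (0, 1/2) and f(t) = 0 otherwise. Then: (a) f ∈ L²(ℝ), i.e. ∫_0^{1/2} t^{−1}·(log t)^{−2} dt < ∞; and (b) the double integral ∫_{(0,1/2)} ∫_{(0,1/2)} (log|t−s|)² / ( t·s·(log t)²·(log s)² ) ds dt diverges, i.e. equals +∞. -/
/-!
Part (a): on `(0, 1)` the function `t⁻¹ (log t)⁻²` is the nonnegative derivative of `-(log t)⁻¹`,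
which extends continuously to `t = 0` with value `0`, so it is integrable on `(0, b]` for `b < 1`.

Part (b): for `t² < s < t < 1` we have `(log |t - s|)² ≥ (log t)²` and `(log s)² ≤ 4 (log t)²`,
so the inner integral over `s ∈ (t², t)` is at least `∫ ds / (4 t s (log t)²) = 1 / (4 t |log t|)`.
Up to sign this is the derivative of `log (log t)`, which blows up as `t → 0⁺`; hence it is not
integrable near `0`.
-/

open MeasureTheory ENNReal Set Filter Topology

lemma hasDerivAt_neg_inv_log {x : ℝ} (hx : x ≠ 0) (hlog : Real.log x ≠ 0) :
    HasDerivAt (fun y => -(Real.log y)⁻¹) (x⁻¹ * (Real.log x ^ 2)⁻¹) x :=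
  ((Real.hasDerivAt_log hx).inv hlog).neg.congr_deriv (by field_simp)

-- Holds thanks to the junk value `Real.log 0 = 0`.
lemma continuousAt_inv_log_zero : ContinuousAt (fun x => (Real.log x)⁻¹) 0 := by
  have h : Tendsto (fun x => (Real.log x)⁻¹) (𝓝[≠] 0) (𝓝 0) :=
    Real.tendsto_log_nhdsNE_zero.inv_tendsto_atBot
  exact continuousWithinAt_compl_self.1 (by simpa [ContinuousWithinAt] using h)

lemma integrableOn_inv_mul_inv_log_sq {b : ℝ} (hb : b < 1) :
    IntegrableOn (fun t : ℝ => t⁻¹ * (Real.log t ^ 2)⁻¹) (Ioc 0 b) := by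
  have hlog : ∀ x ∈ Ioc 0 b, Real.log x < 0 := fun x hx => Real.log_neg hx.1 (hx.2.trans_lt hb)
  refine intervalIntegral.integrableOn_deriv_of_nonneg (g := fun y => -(Real.log y)⁻¹) ?_
    (fun x hx => hasDerivAt_neg_inv_log hx.1.ne' (hlog x (Ioo_subset_Ioc_self hx)).ne)
    (fun x hx => by have := hx.1.le; positivity)
  intro x hx
  rcases hx.1.eq_or_lt with rfl | hx0
  · exact continuousAt_inv_log_zero.neg.continuousWithinAt
  · exact ((Real.continuousAt_log hx0.ne').inv₀ (hlog x ⟨hx0, hx.2⟩).ne).neg.continuousWithinAt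

lemma rpow_neg_half_mul_inv_abs_log_sq {t : ℝ} (ht : 0 < t) :
    (t ^ (-(1 : ℝ) / 2) * |Real.log t|⁻¹) ^ 2 = t⁻¹ * (Real.log t ^ 2)⁻¹ := by
  rw [mul_pow, inv_pow, sq_abs, ← Real.rpow_natCast, ← Real.rpow_mul ht.le]
  norm_num [Real.rpow_neg_one]

lemma memLp_two_rpow_neg_half_mul_inv_abs_log {b : ℝ} (hb : b < 1) :
    MemLp (fun t : ℝ =>
      if 0 < t ∧ t < b then t ^ (-(1 : ℝ) / 2) * |Real.log t|⁻¹ else 0) 2 volume := by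
  have hind : (fun t : ℝ => if 0 < t ∧ t < b then t ^ (-(1 : ℝ) / 2) * |Real.log t|⁻¹ else 0) =
      (Ioo 0 b).indicator fun t => t ^ (-(1 : ℝ) / 2) * |Real.log t|⁻¹ := by
    ext t; simp [indicator_apply]
  rw [hind, memLp_indicator_iff_restrict measurableSet_Ioo,
    memLp_two_iff_integrable_sq (by fun_prop : Measurable _).aestronglyMeasurable]
  exact ((integrableOn_inv_mul_inv_log_sq hb).mono_set Ioo_subset_Ioc_self).congr_fun
    (fun t ht => (rpow_neg_half_mul_inv_abs_log_sq ht.1).symm) measurableSet_Ioo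

lemma hasDerivAt_log_log {x : ℝ} (hx : x ≠ 0) (hlog : Real.log x ≠ 0) :
    HasDerivAt (fun y => Real.log (Real.log y)) (x⁻¹ / Real.log x) x :=
  (Real.hasDerivAt_log hx).log hlog

lemma tendsto_norm_log_log_nhdsGT_zero :
    Tendsto (fun x => ‖Real.log (Real.log x)‖) (𝓝[>] 0) atTop := by
  have h := Real.tendsto_log_atTop.comp
    (tendsto_abs_atBot_atTop.comp Real.tendsto_log_nhdsGT_zero)
  simpa [Function.comp_def, Real.log_abs] using tendsto_norm_atTop_atTop.comp h

lemma setLIntegral_enorm_inv_div_log_eq_top {b : ℝ} (hb : 0 < b) :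
    ∫⁻ t in Ioo 0 b, ‖t⁻¹ / Real.log t‖ₑ = ∞ := by
  have hderiv : ∀ᶠ x in 𝓝[>] (0 : ℝ),
      HasDerivAt (fun y => Real.log (Real.log y)) (x⁻¹ / Real.log x) x := by
    filter_upwards [Ioo_mem_nhdsGT one_pos] with x hx
    exact hasDerivAt_log_log hx.1.ne' (Real.log_neg hx.1 hx.2).ne
  have hnot : ¬ IntegrableOn (fun t : ℝ => t⁻¹ / Real.log t) (Ioo 0 b) :=
    not_integrableOn_of_tendsto_norm_atTop_of_deriv_isBigO_filter (𝓝[>] 0)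
      (Ioo_mem_nhdsGT hb) (hderiv.mono fun x hx => hx.differentiableAt)
      tendsto_norm_log_log_nhdsGT_zero
      (EventuallyEq.isBigO (hderiv.mono fun x hx => hx.deriv))
  by_contra h
  exact hnot ⟨(by fun_prop : Measurable fun t : ℝ => t⁻¹ / Real.log t).aestronglyMeasurable,
    lt_top_iff_ne_top.2 h⟩

lemma setLIntegral_ofReal_inv_Ioo {a b : ℝ} (ha : 0 < a) (hab : a ≤ b) :
    ∫⁻ s in Ioo a b, ENNReal.ofReal s⁻¹ = ENNReal.ofReal (Real.log (b / a)) := by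
  have hint : IntegrableOn (fun s : ℝ => s⁻¹) (Ioo a b) :=
    ((continuousOn_inv₀.mono fun x hx => (ha.trans_le hx.1).ne').integrableOn_Icc).mono_set
      Ioo_subset_Icc_self
  rw [← ofReal_integral_eq_lintegral_ofReal hint
      ((ae_restrict_iff' measurableSet_Ioo).2
        (ae_of_all _ fun s hs => (inv_pos.2 (ha.trans hs.1)).le)),
    ← integral_Ioc_eq_integral_Ioo, ← intervalIntegral.integral_of_le hab,
    integral_inv_of_pos ha (ha.trans_le hab)]

lemma inv_mul_inv_le_log_abs_sub_sq_div {t s : ℝ} (ht0 : 0 < t) (ht1 : t < 1)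
    (hs : s ∈ Ioo (t ^ 2) t) :
    (4 * t * Real.log t ^ 2)⁻¹ * s⁻¹ ≤
      Real.log |t - s| ^ 2 / (t * s * Real.log t ^ 2 * Real.log s ^ 2) := by
  have hs0 : 0 < s := (pow_pos ht0 2).trans hs.1
  have hlogt : Real.log t < 0 := Real.log_neg ht0 ht1
  have hlogs : Real.log s < 0 := Real.log_neg hs0 (hs.2.trans ht1)
  have hlogs_gt : 2 * Real.log t < Real.log s := by
    simpa [Real.log_pow] using Real.log_lt_log (pow_pos ht0 2) hs.1
  have hlog_sub : Real.log |t - s| ≤ Real.log t := by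
    rw [abs_of_pos (sub_pos.2 hs.2)]
    exact Real.log_le_log (sub_pos.2 hs.2) (by linarith)
  calc (4 * t * Real.log t ^ 2)⁻¹ * s⁻¹
      = Real.log t ^ 2 / (t * s * Real.log t ^ 2 * (4 * Real.log t ^ 2)) := by
        field_simp
    _ ≤ Real.log |t - s| ^ 2 / (t * s * Real.log t ^ 2 * Real.log s ^ 2) := by
        have hlogs_sq : Real.log s ^ 2 ≤ 4 * Real.log t ^ 2 := by nlinarith
        have hlog_sub_sq : Real.log t ^ 2 ≤ Real.log |t - s| ^ 2 := by nlinarith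
        have hlogt_ne := hlogt.ne
        have hlogs_ne := hlogs.ne
        gcongr ?_ / (_ * ?_)

lemma enorm_inv_div_log_div_four_le {t b : ℝ} (ht0 : 0 < t) (ht1 : t < 1) (htb : t ≤ b) :
    ‖t⁻¹ / Real.log t‖ₑ / 4 ≤ ∫⁻ s in Ioo 0 b,
      ENNReal.ofReal (Real.log |t - s| ^ 2 / (t * s * Real.log t ^ 2 * Real.log s ^ 2)) := by
  have hlogt : Real.log t < 0 := Real.log_neg ht0 ht1
  have hsq_le : t ^ 2 ≤ t := by nlinarith
  calc ‖t⁻¹ / Real.log t‖ₑ / 4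
      = ENNReal.ofReal (4 * t * Real.log t ^ 2)⁻¹ * ENNReal.ofReal (Real.log (t / t ^ 2)) := by
        rw [Real.enorm_eq_ofReal_abs, ← ENNReal.ofReal_ofNat 4,
          ← ENNReal.ofReal_div_of_pos four_pos, ← ENNReal.ofReal_mul (by positivity)]
        congr 1
        rw [abs_div, abs_inv, abs_of_pos ht0, abs_of_neg hlogt,
          show t / t ^ 2 = t⁻¹ by field_simp, Real.log_inv]
        field_simp
    _ = ∫⁻ s in Ioo (t ^ 2) t, ENNReal.ofReal ((4 * t * Real.log t ^ 2)⁻¹ * s⁻¹) := by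
        rw [← setLIntegral_ofReal_inv_Ioo (pow_pos ht0 2) hsq_le,
          ← lintegral_const_mul' _ _ ofReal_ne_top]
        refine setLIntegral_congr_fun measurableSet_Ioo fun s _ => ?_
        rw [ENNReal.ofReal_mul (by positivity)]
    _ ≤ ∫⁻ s in Ioo (t ^ 2) t,
          ENNReal.ofReal (Real.log |t - s| ^ 2 / (t * s * Real.log t ^ 2 * Real.log s ^ 2)) :=
        setLIntegral_mono' measurableSet_Ioo fun s hs =>
          ENNReal.ofReal_le_ofReal (inv_mul_inv_le_log_abs_sub_sq_div ht0 ht1 hs)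
    _ ≤ _ := lintegral_mono_set (Ioo_subset_Ioo (sq_nonneg t) htb)

/-- Define `f(t) = t^{−1/2} |log t|^{−1}` for `t ∈ (0, 1/2)` and `f(t) = 0`
otherwise. Then (a) `f ∈ L²(ℝ)`, i.e. `∫₀^{1/2} t⁻¹ (log t)⁻² dt < ∞`; and (b) the double
integral `∫∫_{(0,1/2)²} (log|t−s|)² / (t s (log t)² (log s)²) ds dt` diverges to `+∞`. -/
theorem stmt7 :
    MemLp (fun t : ℝ =>
        if 0 < t ∧ t < 1 / 2 then t ^ (-(1 : ℝ) / 2) * |Real.log t|⁻¹ else 0) 2 volume ∧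
    (∫⁻ t in Set.Ioo (0 : ℝ) (1 / 2), ENNReal.ofReal (t⁻¹ * ((Real.log t) ^ 2)⁻¹)) < ∞ ∧
    (∫⁻ t in Set.Ioo (0 : ℝ) (1 / 2), ∫⁻ s in Set.Ioo (0 : ℝ) (1 / 2),
        ENNReal.ofReal
          ((Real.log |t - s|) ^ 2 / (t * s * (Real.log t) ^ 2 * (Real.log s) ^ 2))) = ∞ := by
  refine ⟨memLp_two_rpow_neg_half_mul_inv_abs_log (by norm_num),
    ((integrableOn_inv_mul_inv_log_sq (by norm_num)).mono_set
      Ioo_subset_Ioc_self).lintegral_lt_top, eq_top_iff.2 ?_⟩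
  calc ∞ = (∫⁻ t in Ioo 0 (1 / 2), ‖t⁻¹ / Real.log t‖ₑ) / 4 := by
        rw [setLIntegral_enorm_inv_div_log_eq_top (by norm_num), top_div_of_ne_top ofNat_ne_top]
    _ = ∫⁻ t in Ioo 0 (1 / 2), ‖t⁻¹ / Real.log t‖ₑ / 4 := by
        simp_rw [div_eq_mul_inv]
        exact (lintegral_mul_const' _ _ (by simp)).symm
    _ ≤ _ := setLIntegral_mono' measurableSet_Ioo fun t ht =>
        enorm_inv_div_log_div_four_le ht.1 (ht.2.trans (by norm_num)) ht.2.le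
end
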